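/- arXiv:1509.06942 — 5 statements merged into one kernel-verified Lean document; each statement's English description precedes it below -/
import Mathlib

section
/- If a finite graded poset P admits a symmetric chain decomposition, then P is strongly Sperner. -/
/-- `rk` is a rank function exhibiting the finite poset `α` as graded of rank `n`. -/
def IsGraded {α : Type*} [PartialOrder α] (rk : α → ℕ) (n : ℕ) : Prop :=
  (∀ a b : α, a ⋖ b → rk b = rk a + 1) ∧
  (∀ a : α, (∀ b, ¬ b < a) → rk a = 0) ∧
  (∀ a : α, (∀ b, ¬ a < b) → rk a = n)

/-- The number of elements of rank `k`. -/
noncomputable def rankNum {α : Type*} [Fintype α] (rk : α → ℕ) (k : ℕ) : ℕ :=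
  Nat.card {a : α // rk a = k}

/-- A symmetric chain decomposition of a graded poset of rank `n`: a partition of the
elements into saturated chains (lists of consecutive covers) such that the ranks of the
minimum and the maximum of each chain sum to `n`. -/
def IsSCD {α : Type*} [PartialOrder α] (rk : α → ℕ) (n : ℕ) (𝒞 : Set (List α)) : Prop :=
  (∀ c ∈ 𝒞, c ≠ [] ∧ c.Chain' (· ⋖ ·) ∧
    ∀ x ∈ c.head?, ∀ y ∈ c.getLast?, rk x + rk y = n) ∧
  (∀ a : α, ∃! c, c ∈ 𝒞 ∧ a ∈ c)

/-- A `k`-family: a subset containing no chain with `k+1` elements. -/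
def IsKFamily {α : Type*} [PartialOrder α] (F : Finset α) (k : ℕ) : Prop :=
  ∀ s : Finset α, s ⊆ F → IsChain (· ≤ ·) (s : Set α) → s.card ≤ k

/-- `k`-Sperner: every `k`-family has size at most the sum of the `k` largest rank numbers. -/
def IsKSperner {α : Type*} [Fintype α] [PartialOrder α] (rk : α → ℕ) (n k : ℕ) : Prop :=
  ∀ F : Finset α, IsKFamily F k →
    ∃ S ⊆ Finset.range (n + 1), S.card = min k (n + 1) ∧
      F.card ≤ ∑ i ∈ S, rankNum rk i

/-- Strongly Sperner: `k`-Sperner for all `k ≥ 1`. -/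
def StronglySperner {α : Type*} [Fintype α] [PartialOrder α] (rk : α → ℕ) (n : ℕ) : Prop :=
  ∀ k, 1 ≤ k → IsKSperner rk n k

/-! A chain of a symmetric chain decomposition with `ℓ` elements meets a `k`-family in at most
`min k ℓ` elements. Its ranks form an interval of length `ℓ` centred in `0, …, n`, so it meets
the `m = min k (n + 1)` middle ranks in at least `min m ℓ = min k ℓ` elements. Summing over the
chains bounds `|F|` by the number of elements of the `m` middle ranks. -/

open Finset

theorem card_le_card_of_forall_block_le {α : Type*} [DecidableEq α] {𝒞 : Set (List α)}
    (h𝒞 : ∀ a : α, ∃! c, c ∈ 𝒞 ∧ a ∈ c) {s t : Finset α}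
    (hst : ∀ c ∈ 𝒞, #{a ∈ s | a ∈ c} ≤ #{a ∈ t | a ∈ c}) : #s ≤ #t := by
  choose block hblock using fun a => (h𝒞 a).exists
  have fiber_eq (u : Finset α) (a : α) :
      {x ∈ u | block x = block a} = {x ∈ u | x ∈ block a} := by
    ext x
    simp only [mem_filter, and_congr_right_iff]
    exact fun _ => ⟨fun h => h ▸ (hblock x).2,
      fun hx => (h𝒞 x).unique (hblock x) ⟨(hblock a).1, hx⟩⟩
  rw [card_eq_sum_card_fiberwise (f := block) (t := (s ∪ t).image block)
      (fun a ha => mem_image_of_mem _ (mem_union_left _ ha)),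
    card_eq_sum_card_fiberwise (f := block) (t := (s ∪ t).image block)
      (fun a ha => mem_image_of_mem _ (mem_union_right _ ha))]
  refine sum_le_sum fun c hc => ?_
  obtain ⟨a, -, rfl⟩ := mem_image.1 hc
  rw [fiber_eq, fiber_eq]
  exact hst _ (hblock a).1

theorem IsKFamily.card_filter_mem_le {α : Type*} [PartialOrder α] [DecidableEq α]
    {F : Finset α} {k : ℕ} (hF : IsKFamily F k) {c : List α} (hc : c.Pairwise (· < ·)) :
    #{a ∈ F | a ∈ c} ≤ k := by
  have hcomp : ∀ a ∈ c, ∀ b ∈ c, a ≤ b ∨ b ≤ a :=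
    List.Pairwise.forall_of_forall_of_flip (fun _ _ => Or.inl le_rfl)
      (hc.imp fun h => Or.inl h.le) (hc.imp fun h => Or.inr h.le)
  exact hF _ (filter_subset _ _) fun a ha b hb _ =>
    hcomp a (mem_filter.1 ha).2 b (mem_filter.1 hb).2

def middleRanks (n m : ℕ) : Finset ℕ := Ico ((n + 1 - m) / 2) ((n + 1 - m) / 2 + m)

theorem middleRanks_subset_range {n m : ℕ} (h : m ≤ n + 1) :
    middleRanks n m ⊆ range (n + 1) := by
  intro i
  simp only [middleRanks, mem_Ico, mem_range]
  omega

theorem card_middleRanks (n m : ℕ) : #(middleRanks n m) = m := by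
  simp [middleRanks]

theorem min_le_card_Ico_inter_middleRanks {a ℓ n m : ℕ} (hsym : 2 * a + ℓ = n + 1)
    (hm : m ≤ n + 1) : min ℓ m ≤ #(Ico a (a + ℓ) ∩ middleRanks n m) := by
  rw [middleRanks, Ico_inter_Ico, Nat.card_Ico]
  omega

theorem sum_rankNum_eq_card {α : Type*} [Fintype α] (rk : α → ℕ) (S : Finset ℕ) :
    ∑ i ∈ S, rankNum rk i = #{a | rk a ∈ S} := by
  rw [card_eq_sum_card_fiberwise (f := rk) (t := S) (fun a ha => by simpa using ha)]
  refine sum_congr rfl fun i hi => ?_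
  rw [rankNum, Nat.card_eq_fintype_card, Fintype.card_subtype]
  congr 1
  ext a
  simp only [mem_filter, mem_univ, true_and, iff_and_self]
  rintro rfl
  exact hi

section SaturatedChain

variable {α : Type*} [PartialOrder α] {rk : α → ℕ}

theorem rk_getElem_of_isChain_covBy (hcov : ∀ a b : α, a ⋖ b → rk b = rk a + 1) {x : α}
    {l : List α} (hc : (x :: l).IsChain (· ⋖ ·)) (i : ℕ) (hi : i < (x :: l).length) :
    rk (x :: l)[i] = rk x + i := by
  induction l generalizing x i with
  | nil =>
    obtain rfl : i = 0 := by simpa using hi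
    rfl
  | cons y l ih =>
    obtain ⟨hxy, hc⟩ := List.isChain_cons_cons.1 hc
    cases i with
    | zero => rfl
    | succ j =>
      have := ih hc j (by simpa using hi)
      simp only [List.getElem_cons_succ] at this ⊢
      rw [this, hcov _ _ hxy]
      ring

theorem image_rk_toFinset_of_isChain_covBy [DecidableEq α]
    (hcov : ∀ a b : α, a ⋖ b → rk b = rk a + 1) {x : α} {l : List α}
    (hc : (x :: l).IsChain (· ⋖ ·)) :
    (x :: l).toFinset.image rk = Ico (rk x) (rk x + (l.length + 1)) := by
  ext r
  simp only [mem_image, List.mem_toFinset, List.mem_iff_getElem, mem_Ico]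
  constructor
  · rintro ⟨_, ⟨i, hi, rfl⟩, rfl⟩
    rw [rk_getElem_of_isChain_covBy hcov hc i hi]
    simp only [List.length_cons] at hi
    omega
  · rintro ⟨hlo, hhi⟩
    exact ⟨_, ⟨r - rk x, by simp; omega, rfl⟩,
      by rw [rk_getElem_of_isChain_covBy hcov hc]; omega⟩

theorem card_filter_rk_mem_toFinset [DecidableEq α] (hcov : ∀ a b : α, a ⋖ b → rk b = rk a + 1)
    {x : α} {l : List α} (hc : (x :: l).IsChain (· ⋖ ·)) (W : Finset ℕ) :
    #{y ∈ (x :: l).toFinset | rk y ∈ W} = #(Ico (rk x) (rk x + (l.length + 1)) ∩ W) := by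
  have hinj : Set.InjOn rk (x :: l).toFinset := by
    refine card_image_iff.1 (le_antisymm card_image_le ?_)
    rw [image_rk_toFinset_of_isChain_covBy hcov hc, Nat.card_Ico]
    simpa using List.toFinset_card_le (x :: l)
  rw [← card_image_of_injOn (hinj.mono (filter_subset _ _)), ← filter_image (p := (· ∈ W)),
    image_rk_toFinset_of_isChain_covBy hcov hc, filter_mem_eq_inter]

theorem IsKFamily.card_filter_mem_le_card_filter_middleRanks [Fintype α] [DecidableEq α]
    (hcov : ∀ a b : α, a ⋖ b → rk b = rk a + 1) {F : Finset α} {k n : ℕ} (hF : IsKFamily F k)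
    {x : α} {l : List α} (hc : (x :: l).IsChain (· ⋖ ·))
    (hsym : ∀ y ∈ (x :: l).getLast?, rk x + rk y = n) :
    #{a ∈ F | a ∈ x :: l} ≤
      #{a ∈ {a | rk a ∈ middleRanks n (min k (n + 1))} | a ∈ x :: l} := by
  have hlast : rk x + (rk x + l.length) = n := by
    rw [← hsym (x :: l)[l.length] (by simp [List.getLast?_eq_getElem?]),
      rk_getElem_of_isChain_covBy hcov hc]
  have hle_length : #{a ∈ F | a ∈ x :: l} ≤ l.length + 1 :=
    (card_le_card fun a ha => List.mem_toFinset.2 (mem_filter.1 ha).2).trans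
      (List.toFinset_card_le _)
  have hle_k : #{a ∈ F | a ∈ x :: l} ≤ k :=
    hF.card_filter_mem_le (List.isChain_iff_pairwise.1 (hc.imp fun _ _ h => h.lt))
  have hwindow :
      ({a ∈ {a | rk a ∈ middleRanks n (min k (n + 1))} | a ∈ x :: l} : Finset α) =
        {y ∈ (x :: l).toFinset | rk y ∈ middleRanks n (min k (n + 1))} := by
    ext y
    simp only [mem_filter, mem_univ, true_and, List.mem_toFinset, and_comm]
  rw [hwindow, card_filter_rk_mem_toFinset hcov hc]
  calc #{a ∈ F | a ∈ x :: l} ≤ min (l.length + 1) (min k (n + 1)) := by omega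
    _ ≤ _ := min_le_card_Ico_inter_middleRanks (by omega) (min_le_right _ _)

end SaturatedChain

/-- If a finite graded poset admits a symmetric chain decomposition,
then it is strongly Sperner. -/
theorem stmt_5 {α : Type*} [Fintype α] [PartialOrder α] (rk : α → ℕ) (n : ℕ)
    (hg : IsGraded rk n) (𝒞 : Set (List α)) (hscd : IsSCD rk n 𝒞) :
    StronglySperner rk n := by
  classical
  intro k _ F hF
  refine ⟨middleRanks n (min k (n + 1)), middleRanks_subset_range (min_le_right _ _),
    card_middleRanks _ _, ?_⟩
  rw [sum_rankNum_eq_card]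
  refine card_le_card_of_forall_block_le hscd.2 fun c hc => ?_
  obtain ⟨hne, hchain, hsym⟩ := hscd.1 c hc
  obtain ⟨x, l, rfl⟩ := List.exists_cons_of_ne_nil hne
  exact hF.card_filter_mem_le_card_filter_middleRanks hg.1 hchain (hsym x rfl)
end

section
/- If finite graded posets P and Q each admit a symmetric chain decomposition, then the direct product poset P × Q admits a symmetric chain decomposition. -/
/-
View the product of a symmetric chain `u` of `P` and a symmetric chain `v` of `Q` as a grid. Its first hook runs from `(u₀, v₀)` along the row of `u₀` to the top of `v` and then
along the column of the top of `v` to the top of `u`; its endpoints have the ranks of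
`u₀, v₀` and of the tops of `u, v`, so it is symmetric in `P × Q`. What is left is the grid of
`u.tail` and `v.dropLast`, which are symmetric chains for the ranks `m + 1` and `n - 1`, so the
same total `m + n`; by induction the whole grid splits into symmetric chains. The hooks of all
the grids `u × v`, with `u` and `v` from the two decompositions, partition `P × Q`.
-/

def IsSymmChain {α : Type*} [PartialOrder α] (rk : α → ℕ) (n : ℕ) (c : List α) : Prop :=
  c ≠ [] ∧ c.IsChain (· ⋖ ·) ∧ ∀ x ∈ c.head?, ∀ y ∈ c.getLast?, rk x + rk y = n

theorem eq_of_mem_of_nodup_flatten {γ : Type*} {Ls : List (List γ)} (h : Ls.flatten.Nodup)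
    {L₁ L₂ : List γ} (h₁ : L₁ ∈ Ls) (h₂ : L₂ ∈ Ls) {a : γ} (ha₁ : a ∈ L₁) (ha₂ : a ∈ L₂) :
    L₁ = L₂ := by
  have : Std.Symm (α := List γ) List.Disjoint := ⟨fun _ _ h => h.symm⟩
  by_contra hne
  exact (List.nodup_flatten.1 h).2.forall h₁ h₂ hne ha₁ ha₂

namespace IsSymmChain

variable {α : Type*} [PartialOrder α] {rk : α → ℕ} {n : ℕ}

theorem nodup {c : List α} (h : IsSymmChain rk n c) : c.Nodup :=
  (List.isChain_iff_pairwise.1 (h.2.1.imp fun _ _ hcov => hcov.lt)).nodup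

theorem tail (hrk : ∀ a b : α, a ⋖ b → rk b = rk a + 1) {x : α} {l : List α}
    (h : IsSymmChain rk n (x :: l)) (hl : l ≠ []) : IsSymmChain rk (n + 1) l := by
  obtain ⟨y, l, rfl⟩ := List.exists_cons_of_ne_nil hl
  obtain ⟨-, hchain, hsum⟩ := h
  obtain ⟨hxy, hchain⟩ := List.isChain_cons_cons.1 hchain
  refine ⟨hl, hchain, ?_⟩
  rintro _ ⟨⟩ z hz
  have := hsum x rfl z (List.mem_getLast?_cons hz)
  have := hrk x y hxy
  omega

theorem dropLast (hrk : ∀ a b : α, a ⋖ b → rk b = rk a + 1) {l : List α} {y : α}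
    (h : IsSymmChain rk n (l ++ [y])) (hl : l ≠ []) :
    ∃ n', n = n' + 1 ∧ IsSymmChain rk n' l := by
  obtain ⟨-, hchain, hsum⟩ := h
  obtain ⟨hchain, -, hlast⟩ := List.isChain_append.1 hchain
  obtain ⟨x, hx⟩ := Option.ne_none_iff_exists'.1 (List.head?_eq_none_iff.not.2 hl)
  obtain ⟨z, hz⟩ := Option.ne_none_iff_exists'.1 (List.getLast?_eq_none_iff.not.2 hl)
  have hxy := hsum x (by simp [List.head?_append, hx]) y (by simp)
  have hzy := hrk z y (hlast z hz y rfl)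
  refine ⟨rk x + rk z, by omega, hl, hchain, ?_⟩
  simp only [hx, hz, Option.mem_def, Option.some.injEq]
  rintro _ rfl _ rfl
  rfl

end IsSymmChain

section Hooks

variable {α β : Type*}

def hooks : List α → List β → List (List (α × β))
  | [], _ => []
  | x :: u, v =>
    if h : v = [] then [] else (v.map (x, ·) ++ u.map (·, v.getLast h)) :: hooks u v.dropLast

@[simp]
theorem hooks_nil_right (u : List α) : hooks u ([] : List β) = [] := by
  cases u <;> simp [hooks]

theorem hooks_cons_concat (x : α) (u : List α) (w : List β) (y : β) :
    hooks (x :: u) (w ++ [y]) = ((w ++ [y]).map (x, ·) ++ u.map (·, y)) :: hooks u w := by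
  simp [hooks]

theorem mem_flatten_hooks {u : List α} {v : List β} {p : α × β} :
    p ∈ (hooks u v).flatten ↔ p.1 ∈ u ∧ p.2 ∈ v := by
  induction u generalizing v with
  | nil => simp [hooks]
  | cons x u ih =>
    rcases List.eq_nil_or_concat v with rfl | ⟨w, y, rfl⟩
    · simp
    · obtain ⟨a, b⟩ := p
      simp only [List.concat_eq_append, hooks_cons_concat, List.flatten_cons, List.mem_append,
        List.mem_map, ih, List.mem_cons, Prod.mk.injEq]
      aesop

theorem nodup_flatten_hooks {u : List α} {v : List β} (hu : u.Nodup) (hv : v.Nodup) :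
    (hooks u v).flatten.Nodup := by
  induction u generalizing v with
  | nil => simp [hooks]
  | cons x u ih =>
    rcases List.eq_nil_or_concat v with rfl | ⟨w, y, rfl⟩
    · simp
    · rw [List.concat_eq_append] at hv ⊢
      obtain ⟨hxu, hu⟩ := List.nodup_cons.1 hu
      obtain ⟨hyw, hw⟩ := List.nodup_cons.1 (List.nodup_append_comm.1 hv)
      rw [hooks_cons_concat, List.flatten_cons, List.nodup_append]
      refine ⟨?_, ih hu hw, ?_⟩
      · refine List.nodup_append.2 ⟨hv.map (Prod.mk_right_injective x),
          hu.map (Prod.mk_left_injective y), ?_⟩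
        simp only [List.mem_map]
        rintro _ ⟨b, -, rfl⟩ _ ⟨a, ha, rfl⟩ ⟨⟩
        exact hxu ha
      · rintro p hp q hq rfl
        obtain ⟨hqu, hqw⟩ := mem_flatten_hooks.1 hq
        simp only [List.mem_append, List.mem_map] at hp
        rcases hp with ⟨b, -, rfl⟩ | ⟨a, -, rfl⟩
        · exact hxu hqu
        · exact hyw hqw

section Symmetric

variable [PartialOrder α] [PartialOrder β] {rk₁ : α → ℕ} {rk₂ : β → ℕ}

theorem isSymmChain_hook {m n : ℕ} {x : α} {u : List α} {v : List β} {y : β}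
    (hu : IsSymmChain rk₁ m (x :: u)) (hv : IsSymmChain rk₂ n v) (hy : y ∈ v.getLast?) :
    IsSymmChain (fun p => rk₁ p.1 + rk₂ p.2) (m + n) (v.map (x, ·) ++ u.map (·, y)) := by
  obtain ⟨-, hxu, hsum₁⟩ := hu
  obtain ⟨hv, hvc, hsum₂⟩ := hv
  obtain ⟨hx, huc⟩ := List.isChain_cons.1 hxu
  obtain ⟨b, v, rfl⟩ := List.exists_cons_of_ne_nil hv
  refine ⟨by simp, ?_, ?_⟩
  · rw [List.isChain_append, List.isChain_map, List.isChain_map]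
    refine ⟨hvc.imp fun _ _ h => Prod.mk_covBy_mk_iff_right.2 h,
      huc.imp fun _ _ h => Prod.mk_covBy_mk_iff_left.2 h, ?_⟩
    simp only [List.getLast?_map, List.head?_map, Option.mem_def, Option.map_eq_some_iff]
    rintro _ ⟨_, hy', rfl⟩ _ ⟨a, ha, rfl⟩
    rw [Option.mem_def.1 hy, Option.some.injEq] at hy'
    exact hy' ▸ Prod.mk_covBy_mk_iff_left.2 (hx a ha)
  · rintro p hp q hq
    obtain rfl : p = (x, b) := by simpa [List.head?_append, eq_comm] using hp
    have hxy : ((b :: v).map (x, ·)).getLast? = some (x, y) := by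
      rw [List.getLast?_map, Option.mem_def.1 hy]
      rfl
    rw [List.getLast?_append, hxy, List.getLast?_map] at hq
    obtain ⟨a, ha, rfl⟩ : ∃ a ∈ (x :: u).getLast?, q = (a, y) := by
      cases hlast : u.getLast? with
      | none =>
        exact ⟨x, by rw [List.getLast?_cons, hlast]; rfl, by simpa [hlast, eq_comm] using hq⟩
      | some a => exact ⟨a, List.mem_getLast?_cons hlast, by simpa [hlast, eq_comm] using hq⟩
    have := hsum₁ x rfl a ha
    have := hsum₂ b rfl y hy
    dsimp only
    omega

theorem isSymmChain_of_mem_hooks (hrk₁ : ∀ a b : α, a ⋖ b → rk₁ b = rk₁ a + 1)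
    (hrk₂ : ∀ a b : β, a ⋖ b → rk₂ b = rk₂ a + 1) {m n : ℕ} {u : List α} {v : List β}
    (hu : IsSymmChain rk₁ m u) (hv : IsSymmChain rk₂ n v) {L : List (α × β)}
    (hL : L ∈ hooks u v) : IsSymmChain (fun p => rk₁ p.1 + rk₂ p.2) (m + n) L := by
  induction u generalizing m n v with
  | nil => simp [hooks] at hL
  | cons x u ih =>
    rcases List.eq_nil_or_concat v with rfl | ⟨w, y, rfl⟩
    · simp at hL
    rw [List.concat_eq_append] at hv
    rw [List.concat_eq_append, hooks_cons_concat, List.mem_cons] at hL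
    rcases hL with rfl | hL
    · exact isSymmChain_hook hu hv (by simp)
    · have hu' : u ≠ [] := by rintro rfl; simp [hooks] at hL
      have hw : w ≠ [] := by rintro rfl; simp at hL
      obtain ⟨n, rfl, hw⟩ := hv.dropLast hrk₂ hw
      rw [show m + (n + 1) = m + 1 + n by omega]
      exact ih (hu.tail hrk₁ hu') hw hL

end Symmetric

end Hooks

theorem stmt_6_general {α β : Type*} [PartialOrder α] [PartialOrder β]
    (rk₁ : α → ℕ) (m : ℕ) (rk₂ : β → ℕ) (n : ℕ)
    (hg₁ : IsGraded rk₁ m) (hg₂ : IsGraded rk₂ n)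
    (h₁ : ∃ 𝒞 : Set (List α), IsSCD rk₁ m 𝒞)
    (h₂ : ∃ 𝒞 : Set (List β), IsSCD rk₂ n 𝒞) :
    ∃ 𝒞 : Set (List (α × β)), IsSCD (fun p => rk₁ p.1 + rk₂ p.2) (m + n) 𝒞 := by
  obtain ⟨C, hC, hCpart⟩ := h₁
  obtain ⟨D, hD, hDpart⟩ := h₂
  refine ⟨{L | ∃ u ∈ C, ∃ v ∈ D, L ∈ hooks u v}, ?_, ?_⟩
  · rintro L ⟨u, hu, v, hv, hL⟩
    exact isSymmChain_of_mem_hooks hg₁.1 hg₂.1 (hC u hu) (hD v hv) hL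
  · rintro ⟨x, y⟩
    obtain ⟨u, ⟨hu, hxu⟩, hu_unique⟩ := hCpart x
    obtain ⟨v, ⟨hv, hyv⟩, hv_unique⟩ := hDpart y
    obtain ⟨L, hL, hxyL⟩ :=
      List.mem_flatten.1 ((mem_flatten_hooks (p := (x, y))).2 ⟨hxu, hyv⟩)
    refine ⟨L, ⟨⟨u, hu, v, hv, hL⟩, hxyL⟩, ?_⟩
    rintro L' ⟨⟨u', hu', v', hv', hL'⟩, hxyL'⟩
    obtain ⟨hxu', hyv'⟩ := mem_flatten_hooks.1 (List.mem_flatten.2 ⟨L', hL', hxyL'⟩)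
    obtain rfl : u' = u := hu_unique u' ⟨hu', hxu'⟩
    obtain rfl : v' = v := hv_unique v' ⟨hv', hyv'⟩
    have hnodup := nodup_flatten_hooks (IsSymmChain.nodup (hC u' hu))
      (IsSymmChain.nodup (hD v' hv))
    exact eq_of_mem_of_nodup_flatten hnodup hL' hL hxyL' hxyL

/-- If two finite graded posets each admit a symmetric chain decomposition, then their
direct product (ordered componentwise, graded by the sum of the rank functions) admits a
symmetric chain decomposition. -/
theorem stmt_6 {α β : Type*} [Fintype α] [PartialOrder α] [Fintype β] [PartialOrder β]
    (rk₁ : α → ℕ) (m : ℕ) (rk₂ : β → ℕ) (n : ℕ)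
    (hg₁ : IsGraded rk₁ m) (hg₂ : IsGraded rk₂ n)
    (h₁ : ∃ 𝒞 : Set (List α), IsSCD rk₁ m 𝒞)
    (h₂ : ∃ 𝒞 : Set (List β), IsSCD rk₂ n 𝒞) :
    ∃ 𝒞 : Set (List (α × β)), IsSCD (fun p => rk₁ p.1 + rk₂ p.2) (m + n) 𝒞 :=
  stmt_6_general rk₁ m rk₂ n hg₁ hg₂ h₁ h₂
end

section
/- If a finite graded poset P of rank n admits a symmetric Boolean decomposition, then its rank-generating polynomial is γ-nonnegative; moreover the j-th γ-coefficient equals the number of parts of the decomposition of cardinality 2^{n-2j}. -/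
/-- A symmetric Boolean decomposition of a graded poset of rank `n`: a partition of the
elements into induced subposets, each isomorphic (as a poset, with cover relations agreeing
with those of the ambient poset) to a Boolean lattice of rank `n - 2j`, whose minimum has
rank `j` and whose maximum has rank `n - j`. -/
def IsSymmBoolDecomp {α : Type*} [PartialOrder α] (rk : α → ℕ) (n : ℕ)
    (𝒟 : Set (Set α)) : Prop :=
  (∀ a : α, ∃! B, B ∈ 𝒟 ∧ a ∈ B) ∧
  ∀ B ∈ 𝒟, ∃ j : ℕ, 2 * j ≤ n ∧ ∃ e : B ≃ Finset (Fin (n - 2 * j)),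
    (∀ x y : B, (x : α) ≤ (y : α) ↔ e x ⊆ e y) ∧
    (∀ x y : B, e x ⊆ e y → (e y).card = (e x).card + 1 → (x : α) ⋖ (y : α)) ∧
    (∀ x : B, rk (x : α) = j + (e x).card)

/-!
A block of rank `n - 2j` whose minimum has rank `j` is a copy of `Finset (Fin (n - 2j))` with
ranks shifted by `j`, so its elements contribute `t^j (1 + t)^(n - 2j)` to the rank-generating
polynomial, and its size `2^(n - 2j)` determines `j`. Summing over the blocks and grouping them
by size gives the γ-expansion.
-/

open Finset

theorem Finset.sum_sum_filter_eq_sum_of_existsUnique {ι β M : Type*} [AddCommMonoid M]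
    {t : Finset ι} {s : Finset β} (P : ι → β → Prop) [∀ i, DecidablePred (P i)]
    (h : ∀ b ∈ s, ∃! i, i ∈ t ∧ P i b) (g : β → M) :
    ∑ i ∈ t, ∑ b ∈ s with P i b, g b = ∑ b ∈ s, g b := by
  classical
  rw [Finset.sum_comm' (t' := s) (s' := fun b => {i ∈ t | P i b}) (by aesop)]
  refine Finset.sum_congr rfl fun b hb => ?_
  obtain ⟨i, hi, hunique⟩ := h b hb
  rw [Finset.sum_eq_single_of_mem i (mem_filter.2 hi) fun j hj hji =>
    absurd (hunique j (mem_filter.1 hj)) hji]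

theorem Fintype.sum_pow_card_eq_one_add_pow {R : Type*} [CommSemiring R] (ι : Type*) [Fintype ι]
    (x : R) : ∑ s : Finset ι, x ^ #s = (1 + x) ^ Fintype.card ι := by
  simpa [add_comm] using Fintype.sum_pow_mul_eq_add_pow ι x 1

theorem sum_pow_eq_of_equiv_finset {β ι R : Type*} [Fintype β] [Fintype ι] [CommSemiring R]
    (rk : β → ℕ) (j : ℕ) (e : β ≃ Finset ι) (he : ∀ b, rk b = j + #(e b)) (x : R) :
    ∑ b, x ^ rk b = x ^ j * (1 + x) ^ Fintype.card ι := by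
  simp_rw [he, pow_add, ← mul_sum, ← Fintype.sum_pow_card_eq_one_add_pow]
  congr 1
  exact Fintype.sum_equiv e _ _ fun _ => rfl

theorem sum_rankNum_mul_pow {α R : Type*} [Fintype α] [CommSemiring R] (rk : α → ℕ) {n : ℕ}
    (hrk : ∀ a, rk a ≤ n) (x : R) :
    ∑ k ∈ range (n + 1), (rankNum rk k : R) * x ^ k = ∑ a, x ^ rk a := by
  classical
  rw [← sum_fiberwise_of_maps_to (g := rk) (t := range (n + 1))
    fun a _ => mem_range.2 (Nat.lt_succ_of_le (hrk a))]
  refine sum_congr rfl fun k _ => ?_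
  rw [sum_congr rfl fun a ha => by rw [(mem_filter.1 ha).2], sum_const, nsmul_eq_mul,
    rankNum, Nat.card_eq_fintype_card, Fintype.card_subtype]

namespace IsSymmBoolDecomp

variable {α : Type*} [PartialOrder α] {rk : α → ℕ} {n : ℕ} {𝒟 : Set (Set α)}

theorem existsUnique_card_eq (h : IsSymmBoolDecomp rk n 𝒟) {B : Set α} (hB : B ∈ 𝒟) :
    ∃! j, j ∈ range (n / 2 + 1) ∧ Nat.card B = 2 ^ (n - 2 * j) := by
  obtain ⟨i, hi, e, -⟩ := h.2 B hB
  have hcardB : Nat.card B = 2 ^ (n - 2 * i) := by simp [Nat.card_congr e]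
  refine ⟨i, ⟨mem_range.2 (by omega), hcardB⟩, fun j ⟨hj, hcard⟩ => ?_⟩
  have := Nat.pow_right_injective le_rfl (hcard.symm.trans hcardB)
  have := mem_range.1 hj
  omega

theorem rank_le (h : IsSymmBoolDecomp rk n 𝒟) (a : α) : rk a ≤ n := by
  obtain ⟨B, ⟨hB, ha⟩, -⟩ := h.1 a
  obtain ⟨j, hj, e, -, -, he⟩ := h.2 B hB
  have h1 : rk a = j + #(e ⟨a, ha⟩) := he ⟨a, ha⟩
  have := (card_le_univ (e ⟨a, ha⟩)).trans_eq (Fintype.card_fin _)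
  omega

open Classical in
theorem sum_pow_rank_of_card_eq [Fintype α] {R : Type*} [CommSemiring R]
    (h : IsSymmBoolDecomp rk n 𝒟) {B : Set α} (hB : B ∈ 𝒟) {j : ℕ} (hj : 2 * j ≤ n)
    (hcard : Nat.card B = 2 ^ (n - 2 * j)) (x : R) :
    ∑ a with a ∈ B, x ^ rk a = x ^ j * (1 + x) ^ (n - 2 * j) := by
  classical
  obtain ⟨i, hi, e, -, -, he⟩ := h.2 B hB
  obtain rfl : j = i := (h.existsUnique_card_eq hB).unique ⟨mem_range.2 (by omega), hcard⟩
    ⟨mem_range.2 (by omega), (Nat.card_congr e).trans (by simp)⟩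
  rw [Finset.sum_subtype _ (p := (· ∈ B)) (by simp),
    sum_pow_eq_of_equiv_finset (fun a : B => rk a) j e he, Fintype.card_fin]

end IsSymmBoolDecomp

open Polynomial

theorem stmt_10_general {α : Type*} [Fintype α] [PartialOrder α] (rk : α → ℕ) (n : ℕ)
    (𝒟 : Set (Set α)) (h : IsSymmBoolDecomp rk n 𝒟) :
    (∑ k ∈ Finset.range (n + 1),
        (Polynomial.C (rankNum rk k) * Polynomial.X ^ k : Polynomial ℕ)) =
      ∑ j ∈ Finset.range (n / 2 + 1),
        Polynomial.C (Nat.card {B : Set α // B ∈ 𝒟 ∧ Nat.card B = 2 ^ (n - 2 * j)}) *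
          Polynomial.X ^ j * (1 + Polynomial.X) ^ (n - 2 * j) := by
  classical
  calc (∑ k ∈ range (n + 1), (C (rankNum rk k) * X ^ k : ℕ[X]))
      = ∑ a, X ^ rk a := by simpa only [eq_natCast C] using sum_rankNum_mul_pow rk h.rank_le X
    _ = ∑ B with B ∈ 𝒟, ∑ a with a ∈ B, X ^ rk a :=
        (sum_sum_filter_eq_sum_of_existsUnique (fun B a => a ∈ B) (by simpa using h.1) _).symm
    _ = ∑ j ∈ range (n / 2 + 1),
          ∑ B ∈ ({B | B ∈ 𝒟} : Finset (Set α)) with Nat.card (B : Set α) = 2 ^ (n - 2 * j),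
            ∑ a with a ∈ B, X ^ rk a :=
        (sum_sum_filter_eq_sum_of_existsUnique _
          (fun B hB => h.existsUnique_card_eq (mem_filter.1 hB).2) _).symm
    _ = _ := by
        refine sum_congr rfl fun j hj => ?_
        have hjn : 2 * j ≤ n := by have := mem_range.1 hj; omega
        rw [sum_congr rfl fun B hB => by
            simp only [mem_filter, mem_univ, true_and] at hB
            exact h.sum_pow_rank_of_card_eq hB.1 hjn hB.2 X,
          sum_const, nsmul_eq_mul, filter_filter, Nat.card_eq_fintype_card,
          Fintype.card_subtype, eq_natCast C, mul_assoc]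

/-- If a finite graded poset of rank `n` admits a symmetric Boolean decomposition, then its
rank-generating polynomial is γ-nonnegative; moreover the `j`-th γ-coefficient equals the
number of parts of the decomposition of cardinality `2^{n-2j}`. -/
theorem stmt_10 {α : Type*} [Fintype α] [PartialOrder α] (rk : α → ℕ) (n : ℕ)
    (hg : IsGraded rk n) (𝒟 : Set (Set α)) (h : IsSymmBoolDecomp rk n 𝒟) :
    (∑ k ∈ Finset.range (n + 1),
        (Polynomial.C (rankNum rk k) * Polynomial.X ^ k : Polynomial ℕ)) =
      ∑ j ∈ Finset.range (n / 2 + 1),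
        Polynomial.C (Nat.card {B : Set α // B ∈ 𝒟 ∧ Nat.card B = 2 ^ (n - 2 * j)}) *
          Polynomial.X ^ j * (1 + Polynomial.X) ^ (n - 2 * j) :=
  stmt_10_general rk n 𝒟 h
end

section
/- If P is a finite graded, rank-symmetric, rank-unimodal poset satisfying the normalized matching property, then P admits a symmetric chain decomposition. -/
open Function Finset

section NormalizedMatching

variable {X U Y V : Type*}

def NormalizedMatching (P : X → U → Prop) : Prop :=
  ∀ A : Finset X, #A * Nat.card U ≤ Nat.card {u // ∃ x ∈ A, P x u} * Nat.card X

lemma NormalizedMatching.comp {P : V → Y → Prop} (hP : NormalizedMatching P) {g : U → V}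
    (hg : Injective g) (hcard : Nat.card V ≤ Nat.card U) :
    NormalizedMatching fun u y => P (g u) y := by
  intro C
  have hN : Nat.card {y // ∃ v ∈ C.map ⟨g, hg⟩, P v y} = Nat.card {y // ∃ u ∈ C, P (g u) y} :=
    Nat.card_congr (Equiv.subtypeEquivRight fun y => by simp)
  calc #C * Nat.card Y = #(C.map ⟨g, hg⟩) * Nat.card Y := by rw [card_map]
    _ ≤ Nat.card {y // ∃ u ∈ C, P (g u) y} * Nat.card V := hN ▸ hP _
    _ ≤ Nat.card {y // ∃ u ∈ C, P (g u) y} * Nat.card U := Nat.mul_le_mul_left _ hcard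

lemma NormalizedMatching.card_le [Fintype X] {P : X → U → Prop} (hP : NormalizedMatching P)
    (hXU : Nat.card X ≤ Nat.card U) (A : Finset X) : #A ≤ Nat.card {u // ∃ x ∈ A, P x u} := by
  have hA : #A ≤ Nat.card X := by rw [Nat.card_eq_fintype_card]; exact card_le_univ A
  rcases Nat.eq_zero_or_pos (Nat.card U) with hU | hU
  · omega
  · exact Nat.le_of_mul_le_mul_right ((hP A).trans (Nat.mul_le_mul_left _ hXU)) hU

lemma exists_injective_of_forall_card_le [Fintype U] {r : X → U → Prop}
    (h : ∀ A : Finset X, #A ≤ Nat.card {u // ∃ x ∈ A, r x u}) :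
    ∃ f : X → U, Injective f ∧ ∀ x, r x (f x) := by
  classical
  refine (Fintype.all_card_le_filter_rel_iff_exists_injective r).1 fun A => ?_
  simpa [Nat.card_eq_fintype_card, Fintype.card_subtype] using h A

lemma NormalizedMatching.exists_injective [Fintype X] [Fintype U] {P : X → U → Prop}
    (hP : NormalizedMatching P) (hXU : Nat.card X ≤ Nat.card U) :
    ∃ f : X → U, Injective f ∧ ∀ x, P x (f x) :=
  exists_injective_of_forall_card_le (hP.card_le hXU)

def stackRel (P : X → U → Prop) (Q : U → Y → Prop) : X ⊕ U → U ⊕ Y → Prop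
  | .inl x, .inl u => P x u
  | .inl _, .inr _ => False
  | .inr u, .inl u' => u = u'
  | .inr u, .inr y => Q u y

lemma forall_card_le_stackRel [Fintype X] [Fintype U] [Fintype Y] {P : X → U → Prop}
    {Q : U → Y → Prop} (hP : NormalizedMatching P) (hQ : NormalizedMatching Q)
    (hXU : Nat.card X ≤ Nat.card U) (hXY : Nat.card X = Nat.card Y) (s : Finset (X ⊕ U)) :
    #s ≤ Nat.card {z // ∃ w ∈ s, stackRel P Q w z} := by
  classical
  rw [← card_toLeft_add_card_toRight]
  set A := s.toLeft
  set C := s.toRight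
  set NA : Finset U := {u | ∃ x ∈ A, P x u}
  set NC : Finset Y := {y | ∃ u ∈ C, Q u y}
  have hsub : (NA ∪ C).disjSum NC ⊆ ({z | ∃ w ∈ s, stackRel P Q w z} : Finset _) := by
    intro z hz
    rcases z with u | y
    · simp only [inl_mem_disjSum, mem_union, NA, mem_filter_univ] at hz
      rcases hz with ⟨x, hx, hxu⟩ | hu
      · exact (mem_filter_univ _).2 ⟨.inl x, mem_toLeft.1 hx, hxu⟩
      · exact (mem_filter_univ _).2 ⟨.inr u, mem_toRight.1 hu, rfl⟩
    · obtain ⟨u, hu, huy⟩ := (mem_filter_univ _).1 (inr_mem_disjSum.1 hz)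
      exact (mem_filter_univ _).2 ⟨.inr u, mem_toRight.1 hu, huy⟩
  have hN : #(NA ∪ C) + #NC ≤ Nat.card {z // ∃ w ∈ s, stackRel P Q w z} := by
    rw [← card_disjSum, Nat.card_eq_fintype_card, Fintype.card_subtype]
    exact card_le_card hsub
  have hPA : #A * Nat.card U ≤ #NA * Nat.card X := by
    simpa [Nat.card_eq_fintype_card, Fintype.card_subtype, NA] using hP A
  have hQC : #C * Nat.card Y ≤ #NC * Nat.card U := by
    simpa [Nat.card_eq_fintype_card, Fintype.card_subtype, NC] using hQ C
  have hNA : #NA ≤ #(NA ∪ C) := card_le_card subset_union_left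
  have hC : #C ≤ #(NA ∪ C) := card_le_card subset_union_right
  refine le_trans ?_ hN
  rcases Nat.eq_zero_or_pos (Nat.card U) with hU | hU
  · have hA : #A ≤ Nat.card X := by rw [Nat.card_eq_fintype_card]; exact card_le_univ A
    have hC : #C ≤ Nat.card U := by rw [Nat.card_eq_fintype_card]; exact card_le_univ C
    omega
  · refine Nat.le_of_mul_le_mul_right ?_ hU
    -- with `|U| = |X| + d`: `|C| |U| = |C| |X| + |C| d ≤ |NC| |U| + |NA ∪ C| d`
    obtain ⟨d, hd⟩ := Nat.exists_eq_add_of_le hXU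
    rw [← hXY] at hQC
    rw [hd] at hPA hQC ⊢
    nlinarith

lemma NormalizedMatching.exists_injective_and_equiv [Fintype X] [Fintype U] [Fintype Y]
    {P : X → U → Prop} {Q : U → Y → Prop} (hP : NormalizedMatching P)
    (hQ : NormalizedMatching Q) (hXU : Nat.card X ≤ Nat.card U)
    (hXY : Nat.card X = Nat.card Y) :
    ∃ (μ : X → U) (ρ : X ≃ Y), Injective μ ∧ ∀ x, P x (μ x) ∧ Q (μ x) (ρ x) := by
  obtain ⟨σ, hσ, hσR⟩ :=
    exists_injective_of_forall_card_le (forall_card_le_stackRel hP hQ hXU hXY)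
  have hμ : ∀ x, ∃ u, σ (.inl x) = .inl u ∧ P x u := by
    intro x
    have := hσR (.inl x)
    rcases h : σ (.inl x) with u | y <;> rw [h] at this
    · exact ⟨u, rfl, this⟩
    · exact this.elim
  choose μ hσμ hPμ using hμ
  have hρ : ∀ x, ∃ y, σ (.inr (μ x)) = .inr y ∧ Q (μ x) y := by
    intro x
    have := hσR (.inr (μ x))
    rcases h : σ (.inr (μ x)) with u | y <;> rw [h] at this
    · cases this
      exact absurd (hσ (h.trans (hσμ x).symm)) Sum.inr_ne_inl
    · exact ⟨y, rfl, this⟩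
  choose ρ hσρ hQρ using hρ
  have hμinj : Injective μ := fun x x' h =>
    Sum.inl_injective (hσ ((hσμ x).trans (h ▸ (hσμ x').symm)))
  have hρinj : Injective ρ := fun x x' h =>
    hμinj (Sum.inr_injective (hσ ((hσρ x).trans (h ▸ (hσρ x').symm))))
  have hρbij : Bijective ρ := by
    rw [Fintype.bijective_iff_injective_and_card]
    exact ⟨hρinj, by simpa [Nat.card_eq_fintype_card] using hXY⟩
  exact ⟨μ, .ofBijective ρ hρbij, hμinj, fun x => ⟨hPμ x, hQρ x⟩⟩

end NormalizedMatching

section Graded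

variable {α : Type*} [PartialOrder α] [Finite α] {rk : α → ℕ} {n : ℕ}

lemma IsGraded.strictMono (hg : IsGraded rk n) : StrictMono rk := by
  intro a b hab
  induction b using WellFoundedLT.induction with
  | _ b ih =>
    obtain ⟨c, hac, hcb⟩ := exists_le_covBy_of_lt hab
    rw [hg.1 _ _ hcb]
    rcases hac.eq_or_lt with rfl | hac
    · omega
    · exact (ih c hcb.lt hac).trans (Nat.lt_succ_self _)

lemma IsGraded.rk_le (hg : IsGraded rk n) (a : α) : rk a ≤ n := by
  induction a using WellFoundedGT.induction with
  | _ a ih =>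
    rcases em (∃ b, a < b) with ⟨b, hab⟩ | hmax
    · obtain ⟨c, hac, -⟩ := exists_covBy_le_of_lt hab
      have := ih c hac.lt
      rw [hg.1 _ _ hac] at this
      omega
    · exact (hg.2.2 a (not_exists.1 hmax)).le

end Graded

lemma List.IsChain.head?_eq_of_forall_le {α : Type*} [PartialOrder α] {f : α → ℕ}
    (hf : StrictMono f) {l : List α} (hl : l.IsChain (· ⋖ ·)) {a : α} (ha : a ∈ l)
    (hmin : ∀ b ∈ l, f a ≤ f b) : l.head? = some a := by
  obtain _ | ⟨h, t⟩ := l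
  · simp at ha
  · rcases List.mem_cons.1 ha with rfl | hat
    · rfl
    · have hp := List.isChain_iff_pairwise.1 (hl.imp fun _ _ h => h.lt)
      have := hf (List.rel_of_pairwise_cons hp hat)
      have := hmin h List.mem_cons_self
      omega

lemma injective_of_head?_eq {α : Type*} {p : α → Prop} {c : Subtype p → List α}
    (hhead : ∀ u, (c u).head? = some u.1) : Injective c := fun u u' huu =>
  Subtype.ext (Option.some_injective _ ((hhead u).symm.trans (huu ▸ hhead u')))

section Levels

variable {α : Type*} [Fintype α]

def IsRankSymmetric (rk : α → ℕ) (n : ℕ) : Prop :=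
  ∀ j ≤ n, rankNum rk j = rankNum rk (n - j)

def IsRankUnimodal (rk : α → ℕ) (n : ℕ) : Prop :=
  ∃ j ≤ n, (∀ i, i + 1 ≤ j → rankNum rk i ≤ rankNum rk (i + 1)) ∧
    (∀ i, j ≤ i → i < n → rankNum rk (i + 1) ≤ rankNum rk i)

def HasNormalizedMatching [PartialOrder α] (rk : α → ℕ) : Prop :=
  ∀ i : ℕ, ∀ L : Finset α, (∀ x ∈ L, rk x = i) →
    L.card * rankNum rk (i + 1) ≤
      Nat.card {p : α // rk p = i + 1 ∧ ∃ x ∈ L, x ⋖ p} * rankNum rk i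

variable {rk : α → ℕ} {n : ℕ}

lemma rankNum_le_rankNum_succ (hsym : IsRankSymmetric rk n) (huni : IsRankUnimodal rk n)
    {k : ℕ} (hk : k + 1 + (k + 1) ≤ n) : rankNum rk k ≤ rankNum rk (k + 1) := by
  obtain ⟨j, -, hup, hdown⟩ := huni
  rcases le_or_gt (k + 1) j with hkj | hjk
  · exact hup k hkj
  · have := hdown (n - (k + 1)) (by omega) (by omega)
    rwa [hsym k (by omega), hsym (k + 1) (by omega), show n - k = n - (k + 1) + 1 by omega]

lemma HasNormalizedMatching.normalizedMatching [PartialOrder α] (hnmp : HasNormalizedMatching rk)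
    {i j : ℕ} (hij : j = i + 1) :
    NormalizedMatching fun (x : {a // rk a = i}) (y : {a // rk a = j}) => x.1 ⋖ y.1 := by
  subst hij
  intro A
  have hN : Nat.card {p : α // rk p = i + 1 ∧ ∃ x ∈ A.map (.subtype _), x ⋖ p} =
      Nat.card {y : {a // rk a = i + 1} // ∃ x ∈ A, x.1 ⋖ y.1} :=
    Nat.card_congr <| (Equiv.subtypeSubtypeEquivSubtypeInter _ _).symm.trans
      (Equiv.subtypeEquivRight fun y => by simp)
  have := hnmp i (A.map (.subtype _)) (by simp +contextual)
  rwa [card_map, hN] at this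

end Levels

section Bands

variable {α : Type*} [PartialOrder α] {rk : α → ℕ} {n k : ℕ} {𝒞 : Set (List α)}

/-- `𝒞` is a symmetric chain decomposition of the elements with ranks in `[k, n - k]`. -/
structure IsBandSCD (rk : α → ℕ) (n k : ℕ) (𝒞 : Set (List α)) : Prop where
  ne_nil : ∀ c ∈ 𝒞, c ≠ []
  isChain : ∀ c ∈ 𝒞, c.IsChain (· ⋖ ·)
  rk_head_add_rk_getLast : ∀ c ∈ 𝒞, ∀ x ∈ c.head?, ∀ y ∈ c.getLast?, rk x + rk y = n
  mem_band : ∀ c ∈ 𝒞, ∀ a ∈ c, k ≤ rk a ∧ rk a + k ≤ n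
  exists_mem : ∀ a, k ≤ rk a → rk a + k ≤ n → ∃ c ∈ 𝒞, a ∈ c
  eq_of_mem : ∀ c ∈ 𝒞, ∀ d ∈ 𝒞, ∀ a ∈ c, a ∈ d → c = d

lemma IsBandSCD.isSCD (h : IsBandSCD rk n 0 𝒞) (hle : ∀ a, rk a ≤ n) : IsSCD rk n 𝒞 := by
  refine ⟨fun c hc => ⟨h.ne_nil c hc, h.isChain c hc, h.rk_head_add_rk_getLast c hc⟩,
    fun a => ?_⟩
  obtain ⟨c, hc, hac⟩ := h.exists_mem a (Nat.zero_le _) (by simpa using hle a)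
  exact ⟨c, ⟨hc, hac⟩, fun d ⟨hd, had⟩ => h.eq_of_mem d hd c hc a had hac⟩

lemma isBandSCD_singletons (hn : k + k = n) :
    IsBandSCD rk n k (Set.range fun a : {a // rk a = k} => [a.1]) where
  ne_nil := by rintro _ ⟨a, rfl⟩; simp
  isChain := by rintro _ ⟨a, rfl⟩; exact .singleton _
  rk_head_add_rk_getLast := by
    rintro _ ⟨a, rfl⟩ x hx y hy
    obtain ⟨rfl, rfl⟩ : x = a.1 ∧ y = a.1 := by simp_all
    omega
  mem_band := by
    rintro _ ⟨a, rfl⟩ b hb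
    obtain rfl := List.mem_singleton.1 hb
    omega
  exists_mem a h1 h2 := ⟨[a], ⟨⟨a, by omega⟩, rfl⟩, List.mem_singleton_self a⟩
  eq_of_mem := by
    rintro _ ⟨a, rfl⟩ _ ⟨b, rfl⟩ x hxa hxb
    simp_all

lemma isBandSCD_pairs (hn : k + k + 1 = n) (σ : {a // rk a = k} ≃ {a // rk a = k + 1})
    (hσ : ∀ x, x.1 ⋖ (σ x).1) :
    IsBandSCD rk n k (Set.range fun x => [x.1, (σ x).1]) where
  ne_nil := by rintro _ ⟨x, rfl⟩; simp
  isChain := by rintro _ ⟨x, rfl⟩; exact List.isChain_pair.2 (hσ x)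
  rk_head_add_rk_getLast := by
    rintro _ ⟨x, rfl⟩ a ha b hb
    obtain ⟨rfl, rfl⟩ : a = x.1 ∧ b = (σ x).1 := by simp_all
    have := x.2
    have := (σ x).2
    omega
  mem_band := by
    rintro _ ⟨x, rfl⟩ b hb
    have := x.2
    have := (σ x).2
    rcases List.mem_pair.1 hb with rfl | rfl <;> omega
  exists_mem a h1 h2 := by
    rcases (show rk a = k ∨ rk a = k + 1 by omega) with ha | ha
    · exact ⟨_, ⟨⟨a, ha⟩, rfl⟩, List.mem_cons_self⟩
    · refine ⟨_, ⟨σ.symm ⟨a, ha⟩, rfl⟩, ?_⟩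
      simp
  eq_of_mem := by
    rintro _ ⟨x, rfl⟩ _ ⟨x', rfl⟩ a hx hx'
    rcases List.mem_pair.1 hx with rfl | rfl <;> rcases List.mem_pair.1 hx' with h | h
    · rw [Subtype.ext h]
    · have := congrArg rk h; rw [x.2, (σ x').2] at this; omega
    · have := congrArg rk h; rw [x'.2, (σ x).2] at this; omega
    · rw [σ.injective (Subtype.ext h)]

end Bands

section Extension

variable {α : Type*} [PartialOrder α] {rk : α → ℕ} {n k : ℕ} {𝒞 : Set (List α)}

lemma IsBandSCD.exists_head_getLast (h : IsBandSCD rk n (k + 1) 𝒞) (hrk : StrictMono rk)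
    (hk : k + 1 + (k + 1) ≤ n) (u : {a // rk a = k + 1}) :
    ∃ c ∈ 𝒞, ∃ t, c.head? = some u.1 ∧ c.getLast? = some t := by
  obtain ⟨c, hc, huc⟩ := h.exists_mem u.1 u.2.ge (by omega)
  obtain ⟨t, ht⟩ := Option.ne_none_iff_exists'.1 (List.getLast?_eq_none_iff.not.2 (h.ne_nil c hc))
  refine ⟨c, hc, t, (h.isChain c hc).head?_eq_of_forall_le hrk huc fun b hb => ?_, ht⟩
  rw [u.2]
  exact (h.mem_band c hc b hb).1

lemma IsBandSCD.mem_cons_append_singleton_iff (h : IsBandSCD rk n (k + 1) 𝒞) {c : List α}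
    (hc : c ∈ 𝒞) {x y a : α} (hx : rk x = k) (hy : rk y = n - k) :
    a ∈ x :: c ++ [y] ↔ (rk a = k ∧ a = x) ∨ (rk a = n - k ∧ a = y) ∨
      (k + 1 ≤ rk a ∧ rk a + (k + 1) ≤ n ∧ a ∈ c) := by
  simp only [List.cons_append, List.mem_cons, List.mem_append, List.not_mem_nil, or_false]
  constructor
  · rintro (rfl | hac | rfl)
    · exact .inl ⟨hx, rfl⟩
    · exact .inr (.inr ⟨(h.mem_band c hc a hac).1, (h.mem_band c hc a hac).2, hac⟩)
    · exact .inr (.inl ⟨hy, rfl⟩)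
  · rintro (⟨-, rfl⟩ | ⟨-, rfl⟩ | ⟨-, -, hac⟩)
    · exact .inl rfl
    · exact .inr (.inr rfl)
    · exact .inr (.inl hac)

def extendChains (𝒞 : Set (List α)) (c : {a // rk a = k + 1} → List α)
    (μ : {a // rk a = k} → {a // rk a = k + 1}) (ρ : {a // rk a = k} → {a // rk a = n - k}) :
    Set (List α) :=
  {d ∈ 𝒞 | ∀ x, d.head? ≠ some (μ x).1} ∪ Set.range fun x => x.1 :: c (μ x) ++ [(ρ x).1]

variable {c : {a // rk a = k + 1} → List α} {t : {a // rk a = k + 1} → α}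
  {μ : {a // rk a = k} → {a // rk a = k + 1}} {ρ : {a // rk a = k} ≃ {a // rk a = n - k}}

lemma IsBandSCD.eq_of_mem_extendChains (h : IsBandSCD rk n (k + 1) 𝒞) (hk : k + k < n)
    (hc : ∀ u, c u ∈ 𝒞) (hhead : ∀ u, (c u).head? = some u.1) (hμ : Injective μ) :
    ∀ d ∈ extendChains 𝒞 c μ ρ, ∀ d' ∈ extendChains 𝒞 c μ ρ, ∀ a ∈ d, a ∈ d' → d = d' := by
  have hmem x a := h.mem_cons_append_singleton_iff (hc (μ x)) x.2 (ρ x).2 (a := a)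
  have hkept : ∀ d ∈ 𝒞, (∀ x, d.head? ≠ some (μ x).1) → ∀ x,
      ∀ a ∈ d, a ∉ x.1 :: c (μ x) ++ [(ρ x).1] := by
    intro d hd hhd x a had ha
    have := h.mem_band d hd a had
    rcases (hmem x a).1 ha with ⟨hak, -⟩ | ⟨hak, -⟩ | ⟨-, -, hac⟩
    · omega
    · omega
    · exact hhd x (h.eq_of_mem d hd _ (hc _) a had hac ▸ hhead (μ x))
  rintro d (⟨hd, hhd⟩ | ⟨x, rfl⟩) d' (⟨hd', hhd'⟩ | ⟨x', rfl⟩) a ha ha'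
  · exact h.eq_of_mem d hd d' hd' a ha ha'
  · exact absurd ha' (hkept d hd hhd x' a ha)
  · exact absurd ha (hkept d' hd' hhd' x a ha')
  · suffices x = x' by rw [this]
    rcases (hmem x a).1 ha with ⟨h1, rfl⟩ | ⟨h1, rfl⟩ | ⟨h1, h2, hac⟩ <;>
      rcases (hmem x' _).1 ha' with ⟨h1', h'⟩ | ⟨h1', h'⟩ | ⟨h1', h2', hac'⟩ <;>
      try omega
    · exact Subtype.ext h'
    · exact ρ.injective (Subtype.ext h')
    · exact hμ (injective_of_head?_eq hhead (h.eq_of_mem _ (hc _) _ (hc _) a hac hac'))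

lemma IsBandSCD.extend (h : IsBandSCD rk n (k + 1) 𝒞) (hk : k + k < n)
    (hc : ∀ u, c u ∈ 𝒞) (hhead : ∀ u, (c u).head? = some u.1)
    (hlast : ∀ u, (c u).getLast? = some (t u)) (hμ : Injective μ)
    (hxμ : ∀ x, x.1 ⋖ (μ x).1) (hρ : ∀ x, t (μ x) ⋖ (ρ x).1) :
    IsBandSCD rk n k (extendChains 𝒞 c μ ρ) where
  ne_nil := by
    rintro d (⟨hd, -⟩ | ⟨x, rfl⟩)
    · exact h.ne_nil d hd
    · simp
  isChain := by
    rintro d (⟨hd, -⟩ | ⟨x, rfl⟩)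
    · exact h.isChain d hd
    · refine ((h.isChain _ (hc _)).cons ?_).append (.singleton _) ?_
      · simpa [hhead] using hxμ x
      · simpa [List.getLast?_cons, hlast] using hρ x
  rk_head_add_rk_getLast := by
    rintro d (⟨hd, -⟩ | ⟨x, rfl⟩)
    · exact h.rk_head_add_rk_getLast d hd
    · intro a ha b hb
      rw [List.getLast?_concat, Option.mem_some_iff] at hb
      simp only [List.cons_append, List.head?_cons, Option.mem_some_iff] at ha
      subst ha hb
      have := x.2
      have := (ρ x).2
      omega
  mem_band := by
    rintro d (⟨hd, -⟩ | ⟨x, rfl⟩) a ha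
    · have := h.mem_band d hd a ha
      omega
    · rcases (h.mem_cons_append_singleton_iff (hc (μ x)) x.2 (ρ x).2).1 ha with
        ⟨hak, -⟩ | ⟨hak, -⟩ | ⟨hak, hak', -⟩ <;> omega
  exists_mem a h1 h2 := by
    by_cases hak : rk a = k
    · exact ⟨_, .inr ⟨⟨a, hak⟩, rfl⟩, List.mem_cons_self⟩
    by_cases hank : rk a = n - k
    · refine ⟨_, .inr ⟨ρ.symm ⟨a, hank⟩, rfl⟩, ?_⟩
      simp
    obtain ⟨d, hd, had⟩ := h.exists_mem a (by omega) (by omega)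
    by_cases hhd : ∃ x, d.head? = some (μ x).1
    · obtain ⟨x, hx⟩ := hhd
      have hdc : d = c (μ x) := h.eq_of_mem d hd _ (hc _) _ (List.mem_of_mem_head? hx)
        (List.mem_of_mem_head? (hhead (μ x)))
      exact ⟨_, .inr ⟨x, rfl⟩, by simp [← hdc, had]⟩
    · exact ⟨d, .inl ⟨hd, not_exists.1 hhd⟩, had⟩
  eq_of_mem := h.eq_of_mem_extendChains hk hc hhead hμ

end Extension

section Main

variable {α : Type*} [PartialOrder α] [Fintype α] {rk : α → ℕ} {n : ℕ}

lemma exists_isBandSCD_middle (hsym : IsRankSymmetric rk n) (hnmp : HasNormalizedMatching rk) :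
    ∃ 𝒞, IsBandSCD rk n (n / 2) 𝒞 := by
  obtain ⟨m, rfl | rfl⟩ := Nat.even_or_odd' n
  · rw [show 2 * m / 2 = m by omega]
    exact ⟨_, isBandSCD_singletons (by omega)⟩
  · have hcard : rankNum rk m = rankNum rk (m + 1) := by
      rw [hsym m (by omega)]
      congr 1
      omega
    obtain ⟨σ, hσ, hcov⟩ := (hnmp.normalizedMatching rfl).exists_injective hcard.le
    have hbij : Bijective σ := by
      rw [Fintype.bijective_iff_injective_and_card]
      exact ⟨hσ, by simpa [rankNum, Nat.card_eq_fintype_card] using hcard⟩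
    rw [show (2 * m + 1) / 2 = m by omega]
    exact ⟨_, isBandSCD_pairs (by omega) (.ofBijective σ hbij) hcov⟩

lemma exists_isBandSCD_of_succ (hrk : StrictMono rk) (hsym : IsRankSymmetric rk n)
    (huni : IsRankUnimodal rk n) (hnmp : HasNormalizedMatching rk) {k : ℕ}
    (hk : k + 1 + (k + 1) ≤ n) {𝒞 : Set (List α)} (h : IsBandSCD rk n (k + 1) 𝒞) :
    ∃ 𝒞', IsBandSCD rk n k 𝒞' := by
  choose c hc t hhead hlast using h.exists_head_getLast hrk hk
  have ht : ∀ u, rk (t u) = n - (k + 1) := fun u => by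
    have := h.rk_head_add_rk_getLast _ (hc u) _ (hhead u) _ (hlast u)
    omega
  let τ : {a // rk a = k + 1} → {a // rk a = n - (k + 1)} := fun u => ⟨t u, ht u⟩
  have hτ : Injective τ := fun u u' huu => by
    have htt : t u = t u' := congrArg Subtype.val huu
    exact injective_of_head?_eq hhead <| h.eq_of_mem _ (hc u) _ (hc u') (t u)
      (List.mem_of_mem_getLast? (hlast u)) (htt ▸ List.mem_of_mem_getLast? (hlast u'))
  have hQ := (hnmp.normalizedMatching (i := n - (k + 1)) (j := n - k) (by omega)).comp hτ
    (hsym (k + 1) (by omega)).ge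
  obtain ⟨μ, ρ, hμ, hμρ⟩ := (hnmp.normalizedMatching rfl).exists_injective_and_equiv hQ
    (rankNum_le_rankNum_succ hsym huni hk) (hsym k (by omega))
  exact ⟨_, h.extend (by omega) hc hhead hlast hμ (fun x => (hμρ x).1) (fun x => (hμρ x).2)⟩

lemma exists_isBandSCD (hrk : StrictMono rk) (hsym : IsRankSymmetric rk n)
    (huni : IsRankUnimodal rk n) (hnmp : HasNormalizedMatching rk) {k : ℕ} (hk : k ≤ n / 2) :
    ∃ 𝒞, IsBandSCD rk n k 𝒞 := by
  induction hk using Nat.decreasingInduction with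
  | self => exact exists_isBandSCD_middle hsym hnmp
  | of_succ k hk ih =>
    obtain ⟨_, h⟩ := ih
    exact exists_isBandSCD_of_succ hrk hsym huni hnmp (by omega) h

end Main

/-- If `P` is a finite graded, rank-symmetric, rank-unimodal poset that has the normalized
matching property (`|∇L| / r_{i+1} ≥ |L| / r_i` for each rank level, stated here in
cross-multiplied form), then `P` admits a symmetric chain decomposition. -/
theorem stmt_12 {α : Type*} [Fintype α] [PartialOrder α] (rk : α → ℕ) (n : ℕ)
    (hg : IsGraded rk n)
    (hsym : ∀ j ≤ n, rankNum rk j = rankNum rk (n - j))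
    (huni : ∃ j ≤ n, (∀ i, i + 1 ≤ j → rankNum rk i ≤ rankNum rk (i + 1)) ∧
      (∀ i, j ≤ i → i < n → rankNum rk (i + 1) ≤ rankNum rk i))
    (hnmp : ∀ i : ℕ, ∀ L : Finset α, (∀ x ∈ L, rk x = i) →
      L.card * rankNum rk (i + 1) ≤
        Nat.card {p : α // rk p = i + 1 ∧ ∃ x ∈ L, x ⋖ p} * rankNum rk i) :
    ∃ 𝒞 : Set (List α), IsSCD rk n 𝒞 := by
  obtain ⟨𝒞, h⟩ := exists_isBandSCD hg.strictMono hsym huni hnmp (Nat.zero_le _)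
  exact ⟨𝒞, h.isSCD hg.rk_le⟩
end

section
/- Let w be an element of the complex reflection group G(d,d,n) (realized as monomial n×n matrices whose nonzero entries are d-th roots of unity with product 1) lying below some Coxeter element in absolute order. Then ℓ_T(w) = n − dim Fix(w), where Fix(w) = {v ∈ ℂⁿ : wv = v} and T is the set of reflections of G(d,d,n). -/
open Matrix

/-- Membership in `G(d,d,n)`, realized as monomial `n × n` complex matrices whose nonzero
entries are `d`-th roots of unity with product `1`. -/
def IsGDDN (d n : ℕ) (M : Matrix (Fin n) (Fin n) ℂ) : Prop :=
  ∃ (σ : Equiv.Perm (Fin n)) (z : Fin n → ℂ),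
    (∀ j, z j ^ d = 1) ∧ (∏ j, z j) = 1 ∧
    ∀ i j, M i j = if i = σ j then z j else 0

/-- The dimension of the fixed space `Fix(M) = {v ∈ ℂⁿ : Mv = v}`. -/
noncomputable def fixDim {n : ℕ} (M : Matrix (Fin n) (Fin n) ℂ) : ℕ :=
  Module.finrank ℂ (LinearMap.ker (Matrix.toLin' M - LinearMap.id))

/-- A reflection of `G(d,d,n)`: a nonidentity element whose fixed space is a hyperplane. -/
def IsReflGDDN (d n : ℕ) (t : Matrix (Fin n) (Fin n) ℂ) : Prop :=
  IsGDDN d n t ∧ t ≠ 1 ∧ fixDim t = n - 1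

/-- The absolute (reflection) length: the minimal number of reflections of `G(d,d,n)` whose
product is `w`. -/
noncomputable def refLen (d n : ℕ) (w : Matrix (Fin n) (Fin n) ℂ) : ℕ :=
  sInf {k | ∃ l : List (Matrix (Fin n) (Fin n) ℂ),
    (∀ x ∈ l, IsReflGDDN d n x) ∧ l.prod = w ∧ l.length = k}

/-- A Coxeter element of `G(d,d,n)`: an `e^{2πi/h}`-regular element, where
`h = (n-1)d` is the largest invariant degree; i.e. it has an eigenvector with eigenvalue
`e^{2πi/h}` lying on no reflecting hyperplane. -/
def IsCoxeterElt (d n : ℕ) (γ : Matrix (Fin n) (Fin n) ℂ) : Prop :=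
  IsGDDN d n γ ∧ ∃ v : Fin n → ℂ,
    γ.mulVec v = Complex.exp (2 * Real.pi * Complex.I / (((n : ℂ) - 1) * d)) • v ∧
    ∀ t, IsReflGDDN d n t → t.mulVec v ≠ v

/-!
Every element of `G(d,d,n)` is a product of reflections, and a product of `k` reflections fixes
a subspace of codimension at most `k`; hence `n ≤ ℓ_T(x) + dim Fix(x)` for every `x`.
A Coxeter element `γ = monoMat σ z` is a product of `n` reflections and fixes no nonzero vector:
the weight of the `σ`-orbit through a nonzero coordinate of a regular `e^{2πi/h}`-eigenvector
(`h = (n-1)d`) is a `d`-th root of unity equal to `e^{2πi p/h}`, which forces the orbit to have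
length `n - 1`, so `σ` is an `(n-1)`-cycle plus a fixed point whose weights are `ζ ≠ 1` and `ζ⁻¹`.
Writing `γ = w · (w⁻¹γ)` and using subadditivity of codimension,
`2n ≤ ℓ_T(w) + ℓ_T(w⁻¹γ) + dim Fix(w) + dim Fix(w⁻¹γ) ≤ ℓ_T(γ) + n ≤ 2n`,
so all these inequalities are equalities.
-/

open Equiv Finset Function

section Monomial

variable {n : ℕ}

noncomputable def monoMat (σ : Perm (Fin n)) (z : Fin n → ℂ) : Matrix (Fin n) (Fin n) ℂ :=
  Matrix.of fun i j => if i = σ j then z j else 0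

@[simp]
lemma monoMat_apply (σ : Perm (Fin n)) (z : Fin n → ℂ) (i j : Fin n) :
    monoMat σ z i j = if i = σ j then z j else 0 :=
  rfl

lemma monoMat_mul (σ τ : Perm (Fin n)) (z u : Fin n → ℂ) :
    monoMat σ z * monoMat τ u = monoMat (σ * τ) fun j => z (τ j) * u j := by
  ext i j
  rw [Matrix.mul_apply, Finset.sum_eq_single (τ j)]
  · simp only [monoMat_apply, Perm.mul_apply, if_true]
    by_cases h : i = σ (τ j) <;> simp [h, mul_comm]
  · intro k _ hk
    simp [hk]
  · simp

lemma monoMat_one_one : monoMat 1 (fun _ => 1) = (1 : Matrix (Fin n) (Fin n) ℂ) := by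
  ext i j
  simp only [monoMat_apply, Perm.one_apply, Matrix.one_apply]
  congr

lemma mulVec_monoMat_apply (σ : Perm (Fin n)) (z v : Fin n → ℂ) (j : Fin n) :
    (monoMat σ z *ᵥ v) (σ j) = z j * v j := by
  rw [Matrix.mulVec, dotProduct, Finset.sum_eq_single j]
  · simp
  · intro k _ hk
    simp [σ.injective.ne hk.symm]
  · simp

lemma monoMat_mul_monoMat_inv (σ : Perm (Fin n)) {z : Fin n → ℂ} (hz : ∀ j, z j ≠ 0) :
    monoMat σ z * monoMat σ⁻¹ (fun j => (z (σ⁻¹ j))⁻¹) = 1 := by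
  rw [monoMat_mul, mul_inv_cancel, ← monoMat_one_one]
  congr 1
  funext j
  exact mul_inv_cancel₀ (hz _)

lemma isGDDN_monoMat {d : ℕ} {σ : Perm (Fin n)} {z : Fin n → ℂ} (hz : ∀ j, z j ^ d = 1)
    (hprod : ∏ j, z j = 1) : IsGDDN d n (monoMat σ z) :=
  ⟨σ, z, hz, hprod, fun _ _ => rfl⟩

lemma IsGDDN.exists_eq_monoMat {d : ℕ} {M : Matrix (Fin n) (Fin n) ℂ} (hM : IsGDDN d n M) :
    ∃ σ z, (∀ j, z j ^ d = 1) ∧ ∏ j, z j = 1 ∧ M = monoMat σ z := by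
  obtain ⟨σ, z, hz, hprod, hM⟩ := hM
  exact ⟨σ, z, hz, hprod, Matrix.ext hM⟩

lemma IsGDDN.mul {d : ℕ} {M N : Matrix (Fin n) (Fin n) ℂ} (hM : IsGDDN d n M)
    (hN : IsGDDN d n N) : IsGDDN d n (M * N) := by
  obtain ⟨σ, z, hz, hzprod, rfl⟩ := hM.exists_eq_monoMat
  obtain ⟨τ, u, hu, huprod, rfl⟩ := hN.exists_eq_monoMat
  rw [monoMat_mul]
  refine isGDDN_monoMat (fun j => by rw [mul_pow, hz, hu, one_mul]) ?_
  rw [Finset.prod_mul_distrib, Equiv.prod_comp τ z, hzprod, huprod, one_mul]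

lemma inv_monoMat (σ : Perm (Fin n)) {z : Fin n → ℂ} (hz : ∀ j, z j ≠ 0) :
    (monoMat σ z)⁻¹ = monoMat σ⁻¹ (fun j => (z (σ⁻¹ j))⁻¹) :=
  Matrix.inv_eq_right_inv (monoMat_mul_monoMat_inv σ hz)

lemma IsGDDN.inv {d : ℕ} (hd : d ≠ 0) {M : Matrix (Fin n) (Fin n) ℂ} (hM : IsGDDN d n M) :
    IsGDDN d n M⁻¹ := by
  obtain ⟨σ, z, hz, hprod, rfl⟩ := hM.exists_eq_monoMat
  rw [inv_monoMat σ fun j => (IsUnit.of_pow_eq_one (hz j) hd).ne_zero]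
  refine isGDDN_monoMat (fun j => by rw [inv_pow, hz, inv_one]) ?_
  rw [prod_inv_distrib, Equiv.prod_comp σ⁻¹ z, hprod, inv_one]

lemma IsGDDN.mul_inv_cancel {d : ℕ} (hd : d ≠ 0) {M : Matrix (Fin n) (Fin n) ℂ}
    (hM : IsGDDN d n M) : M * M⁻¹ = 1 := by
  obtain ⟨σ, z, hz, -, rfl⟩ := hM.exists_eq_monoMat
  have hz0 : ∀ j, z j ≠ 0 := fun j => (IsUnit.of_pow_eq_one (hz j) hd).ne_zero
  rw [inv_monoMat σ hz0, monoMat_mul_monoMat_inv σ hz0]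

end Monomial

section Reflection

variable {n : ℕ}

noncomputable def reflWeight (i j : Fin n) (ζ : ℂ) (k : Fin n) : ℂ :=
  if k = j then ζ else if k = i then ζ⁻¹ else 1

/-- The reflection `e_j ↦ ζ e_i`, `e_i ↦ ζ⁻¹ e_j` of `G(d,d,n)`; its reflecting hyperplane is
`v i = ζ * v j`. -/
noncomputable def reflMat (i j : Fin n) (ζ : ℂ) : Matrix (Fin n) (Fin n) ℂ :=
  monoMat (swap i j) (reflWeight i j ζ)

lemma reflWeight_one (i j : Fin n) : reflWeight i j 1 = fun _ => 1 := by
  funext k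
  simp [reflWeight]

lemma reflWeight_pow {d : ℕ} (i j : Fin n) {ζ : ℂ} (hζ : ζ ^ d = 1) (k : Fin n) :
    reflWeight i j ζ k ^ d = 1 := by
  unfold reflWeight
  split_ifs <;> simp [hζ]

lemma reflWeight_ne_zero (i j : Fin n) {ζ : ℂ} (hζ : ζ ≠ 0) (k : Fin n) :
    reflWeight i j ζ k ≠ 0 := by
  unfold reflWeight
  split_ifs <;> simp [hζ]

lemma prod_reflWeight {i j : Fin n} (hij : i ≠ j) {ζ : ℂ} (hζ : ζ ≠ 0) :
    ∏ k, reflWeight i j ζ k = 1 := by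
  rw [Finset.prod_eq_mul i j hij (fun k _ hk => by simp [reflWeight, hk.1, hk.2]) (by simp)
    (by simp)]
  simp [reflWeight, hij, hζ]

lemma mulVec_reflMat_eq_self_iff {i j : Fin n} (hij : i ≠ j) {ζ : ℂ} (hζ : ζ ≠ 0)
    (v : Fin n → ℂ) : reflMat i j ζ *ᵥ v = v ↔ v i = ζ * v j := by
  have hcoord := mulVec_monoMat_apply (swap i j) (reflWeight i j ζ) v
  constructor
  · intro h
    have hj := hcoord j
    rw [swap_apply_right, ← reflMat, h] at hj
    simpa [reflWeight] using hj
  · intro h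
    funext k
    obtain ⟨k, rfl⟩ := (swap i j).surjective k
    rw [reflMat, hcoord]
    by_cases hki : k = i
    · subst hki
      simp [reflWeight, hij, h, hζ]
    by_cases hkj : k = j
    · simp [reflWeight, hkj, h]
    · simp [reflWeight, hki, hkj, swap_apply_of_ne_of_ne hki hkj]

lemma mem_ker_toLin'_sub_id {M : Matrix (Fin n) (Fin n) ℂ} {v : Fin n → ℂ} :
    v ∈ LinearMap.ker (Matrix.toLin' M - LinearMap.id) ↔ M *ᵥ v = v := by
  simp [sub_eq_zero]

lemma isReflGDDN_reflMat {d : ℕ} (hd : d ≠ 0) {i j : Fin n} (hij : i ≠ j) {ζ : ℂ}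
    (hζ : ζ ^ d = 1) : IsReflGDDN d n (reflMat i j ζ) := by
  have hζ0 : ζ ≠ 0 := (IsUnit.of_pow_eq_one hζ hd).ne_zero
  refine ⟨isGDDN_monoMat (reflWeight_pow i j hζ) (prod_reflWeight hij hζ0), ?_, ?_⟩
  · intro h
    have := (mulVec_reflMat_eq_self_iff hij hζ0 (Pi.single j 1)).1 (by rw [h, Matrix.one_mulVec])
    simp [hij] at this
    exact hζ0 this.symm
  · let φ : Module.Dual ℂ (Fin n → ℂ) := LinearMap.proj i - ζ • LinearMap.proj j
    have hker : LinearMap.ker (Matrix.toLin' (reflMat i j ζ) - LinearMap.id) = LinearMap.ker φ := by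
      ext v
      rw [mem_ker_toLin'_sub_id, mulVec_reflMat_eq_self_iff hij hζ0, LinearMap.mem_ker]
      simp [φ, sub_eq_zero]
    have hφ : φ ≠ 0 := fun h => by
      simpa [φ, hij] using LinearMap.congr_fun h (Pi.single i 1)
    have := Module.Dual.finrank_ker_add_one_of_ne_zero hφ
    rw [Module.finrank_fin_fun] at this
    rw [fixDim, hker]
    omega

end Reflection

section FixedSpace

variable {n : ℕ}

lemma fixDim_one : fixDim (1 : Matrix (Fin n) (Fin n) ℂ) = n := by
  have : LinearMap.ker (Matrix.toLin' (1 : Matrix (Fin n) (Fin n) ℂ) - LinearMap.id) = ⊤ := by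
    ext v
    simp
  rw [fixDim, this, finrank_top, Module.finrank_fin_fun]

/-- From `Fix A ∩ Fix B ⊆ Fix (A * B)` and Grassmann's formula. -/
lemma fixDim_add_fixDim_le (A B : Matrix (Fin n) (Fin n) ℂ) :
    fixDim A + fixDim B ≤ n + fixDim (A * B) := by
  unfold fixDim
  set FA := LinearMap.ker (Matrix.toLin' A - LinearMap.id)
  set FB := LinearMap.ker (Matrix.toLin' B - LinearMap.id)
  have hinf : FA ⊓ FB ≤ LinearMap.ker (Matrix.toLin' (A * B) - LinearMap.id) := by
    intro v hv
    rw [Submodule.mem_inf, mem_ker_toLin'_sub_id, mem_ker_toLin'_sub_id] at hv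
    rw [mem_ker_toLin'_sub_id, ← Matrix.mulVec_mulVec, hv.2, hv.1]
  have hsup := Submodule.finrank_le (FA ⊔ FB)
  rw [Module.finrank_fin_fun] at hsup
  have := Submodule.finrank_sup_add_finrank_inf_eq FA FB
  have := Submodule.finrank_mono hinf
  omega

end FixedSpace

section ReflectionProducts

variable {d n : ℕ}

def IsProdOfRefls (d n k : ℕ) (M : Matrix (Fin n) (Fin n) ℂ) : Prop :=
  ∃ l : List (Matrix (Fin n) (Fin n) ℂ), (∀ t ∈ l, IsReflGDDN d n t) ∧ l.length ≤ k ∧ l.prod = M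

lemma isProdOfRefls_one (k : ℕ) : IsProdOfRefls d n k 1 :=
  ⟨[], by simp, by simp, rfl⟩

lemma IsReflGDDN.isProdOfRefls {t : Matrix (Fin n) (Fin n) ℂ} (ht : IsReflGDDN d n t) :
    IsProdOfRefls d n 1 t :=
  ⟨[t], by simpa using ht, le_rfl, by simp⟩

lemma IsProdOfRefls.mul {k m : ℕ} {A B : Matrix (Fin n) (Fin n) ℂ} (hA : IsProdOfRefls d n k A)
    (hB : IsProdOfRefls d n m B) : IsProdOfRefls d n (k + m) (A * B) := by
  obtain ⟨l, hl, hlk, rfl⟩ := hA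
  obtain ⟨l', hl', hl'm, rfl⟩ := hB
  refine ⟨l ++ l', fun t ht => ?_, by simp; omega, List.prod_append⟩
  rcases List.mem_append.1 ht with ht | ht
  exacts [hl t ht, hl' t ht]

lemma IsProdOfRefls.mono {k m : ℕ} {M : Matrix (Fin n) (Fin n) ℂ} (hM : IsProdOfRefls d n k M)
    (hkm : k ≤ m) : IsProdOfRefls d n m M := by
  obtain ⟨l, hl, hlk, rfl⟩ := hM
  exact ⟨l, hl, hlk.trans hkm, rfl⟩

lemma IsProdOfRefls.refLen_le {k : ℕ} {M : Matrix (Fin n) (Fin n) ℂ}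
    (hM : IsProdOfRefls d n k M) : refLen d n M ≤ k := by
  obtain ⟨l, hl, hlk, rfl⟩ := hM
  refine (Nat.sInf_le ?_).trans hlk
  exact ⟨l, hl, rfl, rfl⟩

lemma le_length_add_fixDim_prod (l : List (Matrix (Fin n) (Fin n) ℂ))
    (hl : ∀ t ∈ l, IsReflGDDN d n t) : n ≤ l.length + fixDim l.prod := by
  induction l with
  | nil => simp [fixDim_one]
  | cons t l ih =>
    obtain ⟨-, ht1, htfix⟩ := hl t List.mem_cons_self
    have hn : n ≠ 0 := by
      rintro rfl
      exact ht1 (Subsingleton.elim _ _)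
    have := ih fun t' ht' => hl t' (List.mem_cons_of_mem t ht')
    have := fixDim_add_fixDim_le t l.prod
    rw [List.length_cons, List.prod_cons]
    omega

lemma IsProdOfRefls.le_refLen_add_fixDim {k : ℕ} {M : Matrix (Fin n) (Fin n) ℂ}
    (hM : IsProdOfRefls d n k M) : n ≤ refLen d n M + fixDim M := by
  obtain ⟨l, hl, -, rfl⟩ := hM
  have hne : {k | ∃ l' : List (Matrix (Fin n) (Fin n) ℂ),
      (∀ x ∈ l', IsReflGDDN d n x) ∧ l'.prod = l.prod ∧ l'.length = k}.Nonempty :=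
    ⟨l.length, l, hl, rfl, rfl⟩
  obtain ⟨l', hl', hprod, hlen⟩ := Nat.sInf_mem hne
  have := le_length_add_fixDim_prod l' hl'
  rw [refLen, ← hlen, ← hprod]
  exact this

end ReflectionProducts

section Generation

variable {d n : ℕ}

lemma reflMat_one_mul_reflMat (i j : Fin n) (ζ : ℂ) :
    reflMat i j 1 * reflMat i j ζ = monoMat 1 (reflWeight i j ζ) := by
  simp [reflMat, monoMat_mul, reflWeight_one]

lemma isProdOfRefls_monoMat_perm (hd : d ≠ 0) (σ : Perm (Fin n)) :
    ∃ k, IsProdOfRefls d n k (monoMat σ fun _ => 1) := by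
  induction σ using Perm.swap_induction_on with
  | one => exact ⟨0, monoMat_one_one ▸ isProdOfRefls_one 0⟩
  | swap_mul σ x y hxy ih =>
    obtain ⟨k, hk⟩ := ih
    have hfactor : monoMat (swap x y * σ) (fun _ => 1) = reflMat x y 1 * monoMat σ fun _ => 1 := by
      simp [reflMat, monoMat_mul, reflWeight_one]
    rw [hfactor]
    exact ⟨1 + k, (isReflGDDN_reflMat hd hxy (one_pow d)).isProdOfRefls.mul hk⟩

lemma exists_ne_ne_one_of_prod_eq_one {ι M : Type*} [Fintype ι] [CommMonoid M] {f : ι → M}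
    (h : ∏ i, f i = 1) {i : ι} (hi : f i ≠ 1) : ∃ j ≠ i, f j ≠ 1 := by
  by_contra! hj
  exact hi (by rwa [prod_eq_single i (fun j _ => hj j) (by simp)] at h)

lemma exists_monoMat_one_eq_reflMat_mul (hd : d ≠ 0) {z : Fin n → ℂ} (hz : ∀ k, z k ^ d = 1)
    {i j : Fin n} (hij : i ≠ j) :
    ∃ z', monoMat 1 z = reflMat i j 1 * reflMat i j (z i)⁻¹ * monoMat 1 z' ∧
      (∀ k, z' k ^ d = 1) ∧ ∏ k, z' k = ∏ k, z k ∧ z' i = 1 ∧ ∀ k ≠ i, k ≠ j → z' k = z k := by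
  have hzi0 : z i ≠ 0 := (IsUnit.of_pow_eq_one (hz i) hd).ne_zero
  have hzi : (z i)⁻¹ ≠ 0 := inv_ne_zero hzi0
  set w := reflWeight i j (z i)⁻¹
  have hw : ∀ k, w k ^ d = 1 := reflWeight_pow i j (by rw [inv_pow, hz, inv_one])
  have hwprod : ∏ k, w k = 1 := prod_reflWeight hij hzi
  refine ⟨fun k => (w k)⁻¹ * z k, ?_,
    fun k => by rw [mul_pow, inv_pow, hw, hz, inv_one, one_mul],
    by rw [prod_mul_distrib, prod_inv_distrib, hwprod, inv_one, one_mul],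
    by simp [w, reflWeight, hij, hzi0], fun k hki hkj => by simp [w, reflWeight, hki, hkj]⟩
  rw [reflMat_one_mul_reflMat, monoMat_mul]
  congr 1
  funext k
  exact (mul_inv_cancel_left₀ (reflWeight_ne_zero i j hzi k) _).symm

/-- Each step moves the weight at one nontrivial entry onto another one, at the cost of two
reflections. -/
lemma isProdOfRefls_monoMat_one (hd : d ≠ 0) (z : Fin n → ℂ) (hz : ∀ j, z j ^ d = 1)
    (hprod : ∏ j, z j = 1) :
    IsProdOfRefls d n (2 * (#{j | z j ≠ 1} - 1)) (monoMat 1 z) := by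
  induction hm : #{j | z j ≠ 1} using Nat.strong_induction_on generalizing z with
  | _ m ih =>
  by_cases htriv : ∀ j, z j = 1
  · rw [show z = fun _ => 1 from funext htriv, monoMat_one_one]
    exact isProdOfRefls_one _
  push Not at htriv
  obtain ⟨i, hi⟩ := htriv
  obtain ⟨j, hji, hj⟩ := exists_ne_ne_one_of_prod_eq_one hprod hi
  obtain ⟨z', hfactor, hz', hprod', hz'i, hz'k⟩ :=
    exists_monoMat_one_eq_reflMat_mul hd hz hji.symm
  have hsub : ({k | z' k ≠ 1} : Finset (Fin n)) ⊆ ({k | z k ≠ 1} : Finset (Fin n)).erase i := by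
    intro k hk
    simp only [mem_filter, mem_univ, true_and, mem_erase] at hk ⊢
    have hki : k ≠ i := fun h => hk (h ▸ hz'i)
    refine ⟨hki, ?_⟩
    by_cases hkj : k = j
    · exact hkj ▸ hj
    · rwa [← hz'k k hki hkj]
  have hcard := card_le_card hsub
  rw [card_erase_of_mem (by simpa using hi), hm] at hcard
  have hm2 : 2 ≤ m := hm ▸ one_lt_card.2 ⟨i, by simpa using hi, j, by simpa using hj, hji.symm⟩
  rw [hfactor]
  refine (((isReflGDDN_reflMat hd hji.symm (one_pow d)).isProdOfRefls.mul
    (isReflGDDN_reflMat hd hji.symm (by rw [inv_pow, hz, inv_one])).isProdOfRefls).mul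
    (ih _ (by omega) z' hz' (hprod'.trans hprod) rfl)).mono ?_
  omega

lemma IsGDDN.exists_isProdOfRefls (hd : d ≠ 0) {M : Matrix (Fin n) (Fin n) ℂ}
    (hM : IsGDDN d n M) : ∃ k, IsProdOfRefls d n k M := by
  obtain ⟨σ, z, hz, hprod, rfl⟩ := hM.exists_eq_monoMat
  obtain ⟨k, hk⟩ := isProdOfRefls_monoMat_perm hd σ
  have hsplit : monoMat σ z = monoMat σ (fun _ => 1) * monoMat 1 z := by
    simp [monoMat_mul]
  exact ⟨_, hsplit ▸ hk.mul (isProdOfRefls_monoMat_one hd z hz hprod)⟩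

end Generation

section Orbits

variable {n : ℕ}

def orbitList (σ : Perm (Fin n)) (j : Fin n) (m : ℕ) : List (Fin n) :=
  (List.range m).map fun k => (σ ^ k) j

lemma mem_orbitList {σ : Perm (Fin n)} {j x : Fin n} {m : ℕ} :
    x ∈ orbitList σ j m ↔ ∃ k < m, (σ ^ k) j = x := by
  simp [orbitList]

lemma pow_apply_injOn_minimalPeriod (σ : Perm (Fin n)) (j : Fin n) :
    Set.InjOn (fun k => (σ ^ k) j) (Set.Iio (minimalPeriod σ j)) := by
  simpa [← Perm.iterate_eq_pow] using iterate_injOn_Iio_minimalPeriod (f := σ) (x := j)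

lemma pow_minimalPeriod_apply (σ : Perm (Fin n)) (j : Fin n) : (σ ^ minimalPeriod σ j) j = j := by
  rw [← Perm.iterate_eq_pow, iterate_minimalPeriod]

lemma nodup_orbitList (σ : Perm (Fin n)) (j : Fin n) : (orbitList σ j (minimalPeriod σ j)).Nodup :=
  List.nodup_range.map_on fun a ha b hb hab =>
    pow_apply_injOn_minimalPeriod σ j (by simpa using ha) (by simpa using hb) hab

lemma formPerm_orbitList {σ : Perm (Fin n)} {j : Fin n}
    (hfix : ∀ x ∉ orbitList σ j (minimalPeriod σ j), σ x = x) :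
    (orbitList σ j (minimalPeriod σ j)).formPerm = σ := by
  refine Equiv.ext fun x => ?_
  by_cases hx : x ∈ orbitList σ j (minimalPeriod σ j)
  · obtain ⟨k, hk, rfl⟩ := mem_orbitList.1 hx
    have hk' : k < (orbitList σ j (minimalPeriod σ j)).length := by simpa [orbitList] using hk
    have := List.formPerm_apply_getElem _ (nodup_orbitList σ j) k hk'
    simp only [orbitList, List.getElem_map, List.getElem_range, List.length_map,
      List.length_range] at this
    rw [orbitList, this, ← Perm.iterate_eq_pow, iterate_mod_minimalPeriod_eq, Perm.iterate_eq_pow,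
      pow_succ', Perm.mul_apply]
  · rw [List.formPerm_apply_of_notMem hx, hfix x hx]

lemma mulVec_monoMat_eq_smul_orbit {σ : Perm (Fin n)} {z v : Fin n → ℂ} {c : ℂ}
    (h : monoMat σ z *ᵥ v = c • v) (j : Fin n) (m : ℕ) :
    c ^ m * v ((σ ^ m) j) = (∏ k ∈ range m, z ((σ ^ k) j)) * v j := by
  induction m with
  | zero => simp
  | succ m ih =>
    have hstep : z ((σ ^ m) j) * v ((σ ^ m) j) = c * v ((σ ^ (m + 1)) j) := by
      rw [← mulVec_monoMat_apply, h, pow_succ', Perm.mul_apply, Pi.smul_apply, smul_eq_mul]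
    calc c ^ (m + 1) * v ((σ ^ (m + 1)) j) = c ^ m * (c * v ((σ ^ (m + 1)) j)) := by ring
      _ = z ((σ ^ m) j) * (c ^ m * v ((σ ^ m) j)) := by rw [← hstep]; ring
      _ = (∏ k ∈ range (m + 1), z ((σ ^ k) j)) * v j := by rw [ih, prod_range_succ]; ring

end Orbits

section Cycles

variable {d n : ℕ}

lemma exists_monoMat_swap_mul_eq (hd : d ≠ 0) {z : Fin n → ℂ} (hz : ∀ k, z k ^ d = 1)
    {x y : Fin n} (hxy : x ≠ y) {τ : Perm (Fin n)} (hτx : τ x = x) :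
    ∃ u, monoMat (swap x y * τ) z = reflMat x y (z x)⁻¹ * monoMat τ u ∧
      (∀ k, u k ^ d = 1) ∧ ∏ k, u k = ∏ k, z k ∧ u x = 1 ∧
      ∀ k, τ k ≠ x → τ k ≠ y → u k = z k := by
  have hzx0 : z x ≠ 0 := (IsUnit.of_pow_eq_one (hz x) hd).ne_zero
  have hzx : (z x)⁻¹ ≠ 0 := inv_ne_zero hzx0
  set w := reflWeight x y (z x)⁻¹
  have hw : ∀ k, w k ^ d = 1 := reflWeight_pow x y (by rw [inv_pow, hz, inv_one])
  have hwprod : ∏ k, w k = 1 := prod_reflWeight hxy hzx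
  refine ⟨fun k => (w (τ k))⁻¹ * z k, ?_,
    fun k => by rw [mul_pow, inv_pow, hw, hz, inv_one, one_mul],
    by rw [prod_mul_distrib, prod_inv_distrib, Equiv.prod_comp τ w, hwprod, inv_one, one_mul],
    by simp [hτx, w, reflWeight, hxy, hzx0], fun k hkx hky => by simp [w, reflWeight, hkx, hky]⟩
  rw [reflMat, monoMat_mul]
  congr 1
  funext k
  exact (mul_inv_cancel_left₀ (reflWeight_ne_zero x y hzx _) _).symm

/-- Contracting the cycle `l` one point at a time collects all of its weight at a single
point. -/
lemma exists_monoMat_formPerm_eq (hd : d ≠ 0) (l : List (Fin n)) (hl : l.Nodup)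
    (z : Fin n → ℂ) (hz : ∀ j, z j ^ d = 1) :
    ∃ A z', IsProdOfRefls d n (l.length - 1) A ∧ monoMat l.formPerm z = A * monoMat 1 z' ∧
      (∀ j, z' j ^ d = 1) ∧ ∏ j, z' j = ∏ j, z j ∧ (∀ j ∉ l, z' j = z j) ∧
      (l.filter (z' · ≠ 1)).length ≤ 1 := by
  induction l generalizing z with
  | nil => exact ⟨1, z, isProdOfRefls_one _, by simp, hz, rfl, fun _ _ => rfl, by simp⟩
  | cons x l ih =>
  cases l with
  | nil =>
    exact ⟨1, z, isProdOfRefls_one _, by simp, hz, rfl, fun _ _ => rfl,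
      (List.length_filter_le _ _).trans_eq rfl⟩
  | cons y l =>
  obtain ⟨hx, hl⟩ := List.nodup_cons.1 hl
  have hxy : x ≠ y := fun h => hx (h ▸ List.mem_cons_self)
  obtain ⟨u, hcontract, hu, huprod, hux, hu_out⟩ :=
    exists_monoMat_swap_mul_eq hd hz hxy (List.formPerm_apply_of_notMem hx)
  obtain ⟨A, z', hA, hfac, hz', hprod', hout', hsupp⟩ := ih hl u hu
  refine ⟨reflMat x y (z x)⁻¹ * A, z', ?_, ?_, hz', hprod'.trans huprod, fun j hj => ?_, ?_⟩
  · refine ((isReflGDDN_reflMat hd hxy (by rw [inv_pow, hz, inv_one])).isProdOfRefls.mul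
      hA).mono ?_
    simp only [List.length_cons]
    omega
  · rw [List.formPerm_cons_cons, hcontract, hfac, mul_assoc]
  · have hjl : j ∉ y :: l := fun h => hj (List.mem_cons_of_mem x h)
    simp only [List.mem_cons, not_or] at hj
    rw [hout' j hjl, hu_out j] <;> rw [List.formPerm_apply_of_notMem hjl]
    exacts [hj.1, hj.2.1]
  · rwa [List.filter_cons_of_neg (by simp [hout' x hx, hux])]

end Cycles

section Coxeter

variable {d n : ℕ}

noncomputable def coxeterEigenvalue (d n : ℕ) : ℂ :=
  Complex.exp (2 * Real.pi * Complex.I / (((n : ℂ) - 1) * d))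

lemma isPrimitiveRoot_coxeterEigenvalue (hd : d ≠ 0) (hn : 2 ≤ n) :
    IsPrimitiveRoot (coxeterEigenvalue d n) ((n - 1) * d) := by
  have hcast : ((n : ℂ) - 1) * d = (((n - 1) * d : ℕ) : ℂ) := by
    push_cast [Nat.cast_sub (by omega : 1 ≤ n)]
    ring
  rw [coxeterEigenvalue, hcast]
  exact Complex.isPrimitiveRoot_exp _ (Nat.mul_ne_zero (by omega) hd)

lemma ne_mul_of_regular (hd : d ≠ 0) {v : Fin n → ℂ}
    (hreg : ∀ t, IsReflGDDN d n t → t *ᵥ v ≠ v) {i j : Fin n} (hij : i ≠ j) {ζ : ℂ}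
    (hζ : ζ ^ d = 1) : v i ≠ ζ * v j := fun h =>
  hreg _ (isReflGDDN_reflMat hd hij hζ)
    ((mulVec_reflMat_eq_self_iff hij ((IsUnit.of_pow_eq_one hζ hd).ne_zero) v).2 h)

lemma prod_orbit_eq_pow {σ : Perm (Fin n)} {z v : Fin n → ℂ} {c : ℂ}
    (h : monoMat σ z *ᵥ v = c • v) {j : Fin n} (hj : v j ≠ 0) :
    ∏ k ∈ range (minimalPeriod σ j), z ((σ ^ k) j) = c ^ minimalPeriod σ j := by
  have := mulVec_monoMat_eq_smul_orbit h j (minimalPeriod σ j)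
  rw [pow_minimalPeriod_apply] at this
  exact (mul_right_cancel₀ hj this).symm

/-- The weight of the orbit is `μ ^ p` (`μ` the eigenvalue, `p` the orbit length) and a `d`-th
root of unity, so `(n - 1) d ∣ p d`; `p = n` is only possible for `n = 2`, where `μ ^ d = 1` puts
`v` on a reflecting hyperplane. -/
lemma minimalPeriod_eq_of_regular (hd : 2 ≤ d) (hn : 2 ≤ n) {σ : Perm (Fin n)}
    {z v : Fin n → ℂ} (hz : ∀ j, z j ^ d = 1)
    (hv : monoMat σ z *ᵥ v = coxeterEigenvalue d n • v)
    (hreg : ∀ t, IsReflGDDN d n t → t *ᵥ v ≠ v) {j : Fin n} (hj : v j ≠ 0) :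
    minimalPeriod σ j = n - 1 := by
  set p := minimalPeriod σ j
  have hμ := isPrimitiveRoot_coxeterEigenvalue (by omega : d ≠ 0) hn
  have hp0 : 0 < p := minimalPeriod_pos_of_mem_periodicPts (σ.injective.mem_periodicPts j)
  have hpn : p ≤ n := by simpa using minimalPeriod_le_card (f := σ) (x := j)
  obtain ⟨t, ht⟩ : n - 1 ∣ p := by
    have : coxeterEigenvalue d n ^ (p * d) = 1 := by
      rw [pow_mul, ← prod_orbit_eq_pow hv hj, ← prod_pow]
      exact prod_eq_one fun k _ => hz _
    exact Nat.dvd_of_mul_dvd_mul_right (by omega) ((hμ.pow_eq_one_iff_dvd _).1 this)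
  rcases Nat.lt_or_ge t 2 with ht2 | ht2
  · interval_cases t <;> omega
  exfalso
  have := Nat.mul_le_mul_left (n - 1) ht2
  have hn2 : n = 2 := by omega
  have hσj : σ j ≠ j := fun h => by
    have : p = 1 := minimalPeriod_eq_one_iff_isFixedPt.2 h
    omega
  have hμd : coxeterEigenvalue d n ^ d = 1 := (hμ.pow_eq_one_iff_dvd d).2 (by simp [hn2])
  have hμ0 : coxeterEigenvalue d n ≠ 0 := Complex.exp_ne_zero _
  have hstep := mulVec_monoMat_eq_smul_orbit hv j 1
  simp only [pow_one, range_one, prod_singleton, pow_zero, Perm.one_apply] at hstep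
  refine ne_mul_of_regular (by omega) hreg hσj (ζ := (coxeterEigenvalue d n)⁻¹ * z j)
    (by rw [mul_pow, inv_pow, hμd, hz, inv_one, one_mul]) ?_
  rw [mul_assoc, ← hstep, inv_mul_cancel_left₀ hμ0]

lemma exists_fixed_of_minimalPeriod_eq {σ : Perm (Fin n)} {j : Fin n} (hn : 2 ≤ n)
    (hper : minimalPeriod σ j = n - 1) :
    ∃ j₀, σ j₀ = j₀ ∧ (∀ k < n - 1, (σ ^ k) j ≠ j₀) ∧
      ∀ x, x = j₀ ∨ ∃ k < n - 1, (σ ^ k) j = x := by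
  set O := (range (n - 1)).image fun k => (σ ^ k) j
  have hO : #O = n - 1 := by
    rw [card_image_of_injOn, card_range]
    exact (pow_apply_injOn_minimalPeriod σ j).mono fun k hk => by simpa [hper] using hk
  obtain ⟨j₀, hj₀⟩ : ∃ j₀, univ \ O = {j₀} := card_eq_one.1 (by
    rw [card_univ_sdiff, hO, Fintype.card_fin]
    omega)
  have hmem : ∀ x, x ∉ O ↔ x = j₀ := fun x => by
    rw [← mem_singleton, ← hj₀]
    simp
  have hO_iff : ∀ x, x ∈ O ↔ ∃ k < n - 1, (σ ^ k) j = x := fun x => by simp [O]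
  refine ⟨j₀, ?_, fun k hk h => (hmem _).2 h ((hO_iff _).2 ⟨k, hk, rfl⟩), fun x => ?_⟩
  · rw [← hmem, hO_iff]
    rintro ⟨k, hk, hkj⟩
    apply (hmem j₀).2 rfl
    rw [hO_iff]
    cases k with
    | zero =>
      refine ⟨n - 2, by omega, σ.injective ?_⟩
      rw [← Perm.mul_apply, ← pow_succ', show n - 2 + 1 = n - 1 by omega, ← hper,
        pow_minimalPeriod_apply, ← hkj, pow_zero, Perm.one_apply]
    | succ k =>
      refine ⟨k, by omega, σ.injective ?_⟩
      rw [← Perm.mul_apply, ← pow_succ', hkj]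
  · by_cases hx : x ∈ O
    · exact Or.inr ((hO_iff x).1 hx)
    · exact Or.inl ((hmem x).1 hx)

lemma IsCoxeterElt.exists_monoMat (hd : 2 ≤ d) (hn : 2 ≤ n) {γ : Matrix (Fin n) (Fin n) ℂ}
    (hγ : IsCoxeterElt d n γ) :
    ∃ σ z j₀ j₁, γ = monoMat σ z ∧ (∀ j, z j ^ d = 1) ∧ ∏ j, z j = 1 ∧
      minimalPeriod σ j₁ = n - 1 ∧ σ j₀ = j₀ ∧ (∀ x, x = j₀ ∨ ∃ k < n - 1, (σ ^ k) j₁ = x) ∧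
      ∏ k ∈ range (n - 1), z ((σ ^ k) j₁) ≠ 1 ∧ z j₀ ≠ 1 := by
  obtain ⟨hG, v, hv, hreg⟩ := hγ
  obtain ⟨σ, z, hz, hprod, rfl⟩ := hG.exists_eq_monoMat
  change monoMat σ z *ᵥ v = coxeterEigenvalue d n • v at hv
  obtain ⟨j₁, hj₁⟩ : ∃ j, v j ≠ 0 := by
    by_contra! h
    exact ne_mul_of_regular (i := ⟨0, by omega⟩) (j := ⟨1, by omega⟩) (by omega) hreg
      (by simp [Fin.ext_iff]) (one_pow d) (by simp [h])
  have hper := minimalPeriod_eq_of_regular hd hn hz hv hreg hj₁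
  obtain ⟨j₀, hσj₀, hj₀, hcover⟩ := exists_fixed_of_minimalPeriod_eq hn hper
  have hW : ∏ k ∈ range (n - 1), z ((σ ^ k) j₁) ≠ 1 := by
    rw [← hper, prod_orbit_eq_pow hv hj₁, hper, Ne,
      (isPrimitiveRoot_coxeterEigenvalue (by omega) hn).pow_eq_one_iff_dvd]
    intro h
    have := Nat.le_of_dvd (by omega) h
    have := Nat.mul_le_mul_left (n - 1) hd
    omega
  have hsplit : ∏ j, z j = z j₀ * ∏ k ∈ range (n - 1), z ((σ ^ k) j₁) := by
    have huniv : univ = insert j₀ ((range (n - 1)).image fun k => (σ ^ k) j₁) := by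
      ext x
      rcases hcover x with rfl | ⟨k, hk, rfl⟩
      · simp
      · simpa using Or.inr ⟨k, hk, rfl⟩
    rw [huniv, prod_insert (by simpa using hj₀), prod_image]
    exact (pow_apply_injOn_minimalPeriod σ j₁).mono fun k hk => by simpa [hper] using hk
  refine ⟨σ, z, j₀, j₁, rfl, hz, hprod, hper, hσj₀, hcover, hW, fun h => hW ?_⟩
  rwa [hsplit, h, one_mul] at hprod

lemma IsCoxeterElt.fixDim_eq_zero (hd : 2 ≤ d) (hn : 2 ≤ n) {γ : Matrix (Fin n) (Fin n) ℂ}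
    (hγ : IsCoxeterElt d n γ) : fixDim γ = 0 := by
  obtain ⟨σ, z, j₀, j₁, rfl, -, -, hper, hσj₀, hcover, hW, hz₀⟩ := hγ.exists_monoMat hd hn
  rw [fixDim, Submodule.finrank_eq_zero, Submodule.eq_bot_iff]
  intro u hu
  have horbit := mulVec_monoMat_eq_smul_orbit (c := 1)
    (by rw [one_smul]; exact mem_ker_toLin'_sub_id.1 hu)
  have hu₀ : u j₀ = 0 := by
    have := horbit j₀ 1
    simp only [one_mul, pow_one, hσj₀, range_one, prod_singleton, pow_zero,
      Perm.one_apply] at this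
    by_contra h
    exact hz₀ ((mul_eq_right₀ h).1 this.symm)
  have hu₁ : u j₁ = 0 := by
    have := horbit j₁ (n - 1)
    rw [← hper, pow_minimalPeriod_apply, one_pow, one_mul, hper] at this
    by_contra h
    exact hW ((mul_eq_right₀ h).1 this.symm)
  funext x
  rcases hcover x with rfl | ⟨k, -, rfl⟩
  · exact hu₀
  · simpa [hu₁] using horbit j₁ k

lemma IsCoxeterElt.isProdOfRefls (hd : 2 ≤ d) (hn : 2 ≤ n) {γ : Matrix (Fin n) (Fin n) ℂ}
    (hγ : IsCoxeterElt d n γ) : IsProdOfRefls d n n γ := by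
  obtain ⟨σ, z, j₀, j₁, rfl, hz, hprod, hper, hσj₀, hcover, -, -⟩ := hγ.exists_monoMat hd hn
  set L := orbitList σ j₁ (minimalPeriod σ j₁)
  have hσ : L.formPerm = σ := formPerm_orbitList fun x hx => by
    rcases hcover x with rfl | ⟨k, hk, rfl⟩
    · exact hσj₀
    · exact absurd (mem_orbitList.2 ⟨k, hper ▸ hk, rfl⟩) hx
  obtain ⟨A, z', hA, hfac, hz', hprod', -, hsupp⟩ :=
    exists_monoMat_formPerm_eq (by omega) L (nodup_orbitList σ j₁) z hz
  have hlen : L.length = n - 1 := by simp [L, orbitList, hper]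
  have hcard : #{j | z' j ≠ 1} ≤ 2 :=
    calc #{j | z' j ≠ 1} ≤ #(insert j₀ (L.filter (z' · ≠ 1)).toFinset) := by
          refine card_le_card fun x hx => ?_
          rcases hcover x with rfl | ⟨k, hk, rfl⟩
          · exact mem_insert_self _ _
          · refine mem_insert_of_mem (List.mem_toFinset.2 (List.mem_filter.2 ⟨?_, ?_⟩))
            · exact mem_orbitList.2 ⟨k, hper ▸ hk, rfl⟩
            · simpa using hx
      _ ≤ (L.filter (z' · ≠ 1)).length + 1 :=
          (card_insert_le _ _).trans (Nat.add_le_add_right (List.toFinset_card_le _) 1)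
      _ ≤ 2 := by omega
  rw [← hσ, hfac]
  refine (hA.mul (isProdOfRefls_monoMat_one (by omega) z' hz' (hprod'.trans hprod))).mono ?_
  rw [hlen]
  omega

end Coxeter

/-- For `w ∈ G(d,d,n)` lying below a Coxeter element `γ` in absolute order,
`ℓ_T(w) = n - dim Fix(w)` (stated as `ℓ_T(w) + dim Fix(w) = n`). -/
theorem stmt_16 (d n : ℕ) (hd : 2 ≤ d) (hn : 2 ≤ n)
    (γ w : Matrix (Fin n) (Fin n) ℂ)
    (hγ : IsCoxeterElt d n γ) (hw : IsGDDN d n w)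
    (hle : refLen d n γ = refLen d n w + refLen d n (w⁻¹ * γ)) :
    refLen d n w + fixDim w = n := by
  have hγlen : refLen d n γ ≤ n := (hγ.isProdOfRefls hd hn).refLen_le
  obtain ⟨k, hk⟩ := hw.exists_isProdOfRefls (by omega)
  obtain ⟨k', hk'⟩ := ((hw.inv (by omega)).mul hγ.1).exists_isProdOfRefls (by omega)
  have hwlow := hk.le_refLen_add_fixDim
  have hrestlow := hk'.le_refLen_add_fixDim
  have hfix := fixDim_add_fixDim_le w (w⁻¹ * γ)
  rw [← mul_assoc, hw.mul_inv_cancel (by omega), one_mul, hγ.fixDim_eq_zero hd hn] at hfix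
  omega
end
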